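/- arXiv:2206.02282 — 5 statements merged into one kernel-verified Lean document; each statement's English description precedes it below -/
import Mathlib

section
/- For u ∈ P((ℝ^m)*) and v ∈ P(ℝ^m), define ⟨⟨u,v⟩⟩ := |u₀(v₀)| / (‖u₀‖‖v₀‖) for any nonzero representatives u₀, v₀. Identifying u with the projectivized hyperplane ker(u₀) ⊂ P(ℝ^m), one has ⟨⟨u,v⟩⟩ ≤ d_P(u,v) ≤ 2⟨⟨u,v⟩⟩, where d_P(u,v) denotes the minimal projective distance from v to points of the hyperplane u. -/
/-! For the unit vector `x = v₀ / ‖v₀‖`, the number `|u₀ x| / ‖u₀‖` is the distance from `x` to the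
hyperplane `ker u₀`: it bounds `‖w - x‖` from below for every `w ∈ ker u₀` because
`u₀ x = u₀ (x - w)`, and it is attained at the orthogonal projection `p` of `x`. Normalizing `p`
moves it by at most another `‖x - p‖`, which gives the factor 2. -/

open NormedSpace RealInnerProductSpace

section Normed

variable {E : Type*} [NormedAddCommGroup E] [NormedSpace ℝ E]

theorem abs_apply_div_opNorm_le_norm_sub (u : E →L[ℝ] ℝ) {w : E} (hw : u w = 0) (x : E) :
    |u x| / ‖u‖ ≤ ‖w - x‖ := by
  refine div_le_of_le_mul₀ (norm_nonneg u) (norm_nonneg _) ?_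
  calc |u x| = ‖u (x - w)‖ := by simp [hw]
    _ ≤ ‖u‖ * ‖x - w‖ := u.le_opNorm _
    _ = ‖w - x‖ * ‖u‖ := by rw [norm_sub_rev, mul_comm]

theorem abs_apply_div_norm_mul_norm_eq (u : E →L[ℝ] ℝ) {v : E} {t : ℝ} (ht : ‖t • v‖ = 1) :
    |u v| / (‖u‖ * ‖v‖) = |u (t • v)| / ‖u‖ := by
  rw [norm_smul, Real.norm_eq_abs] at ht
  have hv : ‖v‖ = |t|⁻¹ := eq_inv_of_mul_eq_one_right ht
  rw [map_smul, smul_eq_mul, abs_mul, hv, mul_div_assoc, div_mul_eq_div_div, div_inv_eq_mul,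
    mul_comm]

/-- Normalizing `p` moves it by `|1 - ‖p‖| ≤ ‖x - p‖`; if `p = 0`, any unit vector of `K` is
within `2 = 2‖x - p‖` of `x`. -/
theorem exists_norm_eq_one_mem_norm_sub_le {K : Submodule ℝ E} (hK : K ≠ ⊥) {x p : E}
    (hx : ‖x‖ = 1) (hp : p ∈ K) : ∃ w ∈ K, ‖w‖ = 1 ∧ ‖w - x‖ ≤ 2 * ‖x - p‖ := by
  by_cases hp0 : p = 0
  · obtain ⟨z, hzK, hz0⟩ := Submodule.exists_mem_ne_zero_of_ne_bot hK
    refine ⟨normalize z, K.smul_mem _ hzK, norm_normalize_eq_one_iff.mpr hz0, ?_⟩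
    calc ‖normalize z - x‖ ≤ ‖normalize z‖ + ‖x‖ := norm_sub_le _ _
      _ = 2 * ‖x - p‖ := by rw [norm_normalize_eq_one_iff.mpr hz0, hx, hp0, sub_zero, hx]; norm_num
  · have hw : ‖normalize p‖ = 1 := norm_normalize_eq_one_iff.mpr hp0
    have hwp : ‖normalize p - p‖ ≤ ‖x - p‖ := by
      calc ‖normalize p - p‖ = ‖(1 - ‖p‖) • normalize p‖ := by
            rw [sub_smul, one_smul, norm_smul_normalize]
        _ = |‖x‖ - ‖p‖| := by rw [norm_smul, hw, mul_one, Real.norm_eq_abs, hx]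
        _ ≤ ‖x - p‖ := abs_norm_sub_norm_le x p
    refine ⟨normalize p, K.smul_mem _ hp, hw, ?_⟩
    calc ‖normalize p - x‖ ≤ ‖normalize p - p‖ + ‖p - x‖ := norm_sub_le_norm_sub_add_norm_sub _ _ _
      _ ≤ 2 * ‖x - p‖ := by rw [norm_sub_rev p x]; linarith

end Normed

section InnerProduct

variable {F : Type*} [NormedAddCommGroup F] [InnerProductSpace ℝ F] [CompleteSpace F]

/-- The foot of the perpendicular from `x` to `ker u` is `x - (u x / ‖a‖²) • a`, where `a` is the
Riesz representative of `u`. -/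
theorem exists_apply_eq_zero_norm_sub_eq (u : F →L[ℝ] ℝ) (x : F) :
    ∃ p, u p = 0 ∧ ‖x - p‖ = |u x| / ‖u‖ := by
  by_cases hu : u = 0
  · exact ⟨x, by simp [hu]⟩
  set a := (InnerProductSpace.toDual ℝ F).symm u
  have ha : ∀ y, ⟪a, y⟫ = u y := fun _ ↦ InnerProductSpace.toDual_symm_apply
  have hna : ‖a‖ = ‖u‖ := (InnerProductSpace.toDual ℝ F).symm.norm_map u
  have hna0 : ‖a‖ ≠ 0 := by rw [hna]; exact norm_ne_zero_iff.mpr hu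
  refine ⟨x - (u x / ‖a‖ ^ 2) • a, ?_, ?_⟩
  · rw [← ha, inner_sub_right, real_inner_smul_right, real_inner_self_eq_norm_sq, ha]
    field_simp
    ring
  · rw [sub_sub_cancel, norm_smul, Real.norm_eq_abs, abs_div, abs_pow, abs_norm, hna]
    field_simp

end InnerProduct

theorem angle_vs_projective_distance_general {m : ℕ} (hm : 2 ≤ m)
    (u₀ : EuclideanSpace ℝ (Fin m) →L[ℝ] ℝ)
    (v₀ : EuclideanSpace ℝ (Fin m)) (hv : v₀ ≠ 0) :
    |u₀ v₀| / (‖u₀‖ * ‖v₀‖) ≤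
      sInf {r : ℝ | ∃ w : EuclideanSpace ℝ (Fin m), u₀ w = 0 ∧ ‖w‖ = 1 ∧
        ∃ t : ℝ, ‖t • v₀‖ = 1 ∧ r = ‖w - t • v₀‖} ∧
    sInf {r : ℝ | ∃ w : EuclideanSpace ℝ (Fin m), u₀ w = 0 ∧ ‖w‖ = 1 ∧
        ∃ t : ℝ, ‖t • v₀‖ = 1 ∧ r = ‖w - t • v₀‖} ≤
      2 * (|u₀ v₀| / (‖u₀‖ * ‖v₀‖)) := by
  have hK : LinearMap.ker (u₀ : EuclideanSpace ℝ (Fin m) →ₗ[ℝ] ℝ) ≠ ⊥ :=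
    LinearMap.ker_ne_bot_of_finrank_lt (by simp; omega)
  have hx : ‖(‖v₀‖⁻¹ : ℝ) • v₀‖ = 1 := norm_smul_inv_norm hv
  obtain ⟨p, hp, hxp⟩ := exists_apply_eq_zero_norm_sub_eq u₀ ((‖v₀‖⁻¹ : ℝ) • v₀)
  obtain ⟨w, hw, hw1, hwx⟩ := exists_norm_eq_one_mem_norm_sub_le hK hx hp
  set S := {r : ℝ | ∃ w : EuclideanSpace ℝ (Fin m), u₀ w = 0 ∧ ‖w‖ = 1 ∧
    ∃ t : ℝ, ‖t • v₀‖ = 1 ∧ r = ‖w - t • v₀‖}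
  have hwS : ‖w - (‖v₀‖⁻¹ : ℝ) • v₀‖ ∈ S := ⟨w, hw, hw1, _, hx, rfl⟩
  constructor
  · refine le_csInf ⟨_, hwS⟩ ?_
    rintro r ⟨w', hw', -, t, ht, rfl⟩
    rw [abs_apply_div_norm_mul_norm_eq u₀ ht]
    exact abs_apply_div_opNorm_le_norm_sub u₀ hw' _
  · refine (csInf_le ⟨0, ?_⟩ hwS).trans ?_
    · rintro r ⟨-, -, -, -, -, rfl⟩
      exact norm_nonneg _
    · rwa [abs_apply_div_norm_mul_norm_eq u₀ hx, ← hxp]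

/-- For a nonzero continuous linear functional `u₀` on `ℝ^m` and a nonzero vector
`v₀`, the quantity `⟨⟨u,v⟩⟩ = |u₀(v₀)|/(‖u₀‖‖v₀‖)` (which only depends on the
projective classes) is comparable, within a factor of 2, to the minimal projective
distance from the line of `v₀` to the lines in the hyperplane `ker u₀`:
`⟨⟨u,v⟩⟩ ≤ d_P(u,v) ≤ 2⟨⟨u,v⟩⟩`, where
`d_P(u,v) = inf {‖w − v'‖ : w ∈ ker u₀, ‖w‖ = 1, v' ∈ span v₀, ‖v'‖ = 1}`. -/
theorem angle_vs_projective_distance {m : ℕ} (hm : 2 ≤ m)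
    (u₀ : EuclideanSpace ℝ (Fin m) →L[ℝ] ℝ) (hu : u₀ ≠ 0)
    (v₀ : EuclideanSpace ℝ (Fin m)) (hv : v₀ ≠ 0) :
    |u₀ v₀| / (‖u₀‖ * ‖v₀‖) ≤
      sInf {r : ℝ | ∃ w : EuclideanSpace ℝ (Fin m), u₀ w = 0 ∧ ‖w‖ = 1 ∧
        ∃ t : ℝ, ‖t • v₀‖ = 1 ∧ r = ‖w - t • v₀‖} ∧
    sInf {r : ℝ | ∃ w : EuclideanSpace ℝ (Fin m), u₀ w = 0 ∧ ‖w‖ = 1 ∧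
        ∃ t : ℝ, ‖t • v₀‖ = 1 ∧ r = ‖w - t • v₀‖} ≤
      2 * (|u₀ v₀| / (‖u₀‖ * ‖v₀‖)) :=
  angle_vs_projective_distance_general hm u₀ v₀ hv
end

section
/- Let A, B ∈ GL(m,ℝ) and let w be a unit vector attaining ‖Bw‖ = ‖B‖. If α is the angle between the line spanned by Bw and the hyperplane S_{m−1}(A) (the span of the eigenvectors of √(A*A) corresponding to the m−1 smallest singular values), then ‖AB‖ ≥ σ_1(A)·‖B‖·sin α. -/
noncomputable def singVal {m : ℕ} (A : Matrix (Fin m) (Fin m) ℝ) : Fin m → ℝ :=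
  fun i =>
    Real.sqrt
      (((Matrix.isHermitian_conjTranspose_mul_self A).eigenvalues ∘
        Tuple.sort ((Matrix.isHermitian_conjTranspose_mul_self A).eigenvalues)) i.rev)

/-- The square root of a positive semidefinite matrix, as `Matrix.PosSemidef.sqrt` was
defined in Mathlib (December 2024); removed from Mathlib since. -/
noncomputable def Matrix.PosSemidef.sqrt {n 𝕜 : Type*} [Fintype n] [DecidableEq n] [RCLike 𝕜]
    [PartialOrder 𝕜] {A : Matrix n n 𝕜} (hA : A.PosSemidef) : Matrix n n 𝕜 :=
  hA.1.eigenvectorUnitary.1 * Matrix.diagonal ((↑) ∘ (√·) ∘ hA.1.eigenvalues) *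
    (star hA.1.eigenvectorUnitary : Matrix n n 𝕜)

noncomputable def Usub {m : ℕ} (A : Matrix (Fin m) (Fin m) ℝ) (p : ℕ) :
    Submodule ℝ (EuclideanSpace ℝ (Fin m)) :=
  ⨆ i : Fin m, ⨆ _ : (i : ℕ) < p,
    Module.End.eigenspace
      (Matrix.toEuclideanLin ((Matrix.posSemidef_self_mul_conjTranspose A).sqrt))
      (singVal A i)

/-- The hyperplane `S_{m−1}(A) := U_{m−1}(A⁻¹)`, spanned by the eigenvectors of
`√(AᴴA)` corresponding to the `m−1` smallest singular values. -/
noncomputable def Shyp {m : ℕ} (A : GL (Fin m) ℝ) :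
    Submodule ℝ (EuclideanSpace ℝ (Fin m)) :=
  Usub ((↑(A⁻¹) : Matrix (Fin m) (Fin m) ℝ)) (m - 1)

/-!
Put `v = Bw` and `x = ABw`, so that `v = A⁻¹x`, and let `u` be the component of `v` orthogonal
to `S_{m−1}(A)`. The eigenvectors of `√(A⁻¹A⁻ᴴ)` are those of `A⁻¹A⁻ᴴ`, whose eigenvalues are
the squared singular values of `A⁻¹`; so `u` lies in the eigenspace of `A⁻¹A⁻ᴴ` for `λ²`,
where `λ = σ_m(A⁻¹)`, and `‖A⁻ᴴu‖ = λ‖u‖`. Hence `‖u‖² = ⟪A⁻¹x, u⟫ = ⟪x, A⁻ᴴu⟫ ≤ λ‖x‖‖u‖`.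
Since `‖v‖ sin α ≤ ‖u‖`, `‖v‖ = ‖B‖` and `σ₁(A) λ ≤ 1`, we get
`σ₁(A)‖B‖ sin α ≤ σ₁(A) λ ‖x‖ ≤ ‖x‖ ≤ ‖AB‖`.
-/

open scoped Matrix InnerProduct RealInnerProductSpace

namespace OrthonormalBasis

variable {ι E : Type*} [Fintype ι] [NormedAddCommGroup E] [InnerProductSpace ℝ E]
  (e : OrthonormalBasis ι ℝ E) {T : E →ₗ[ℝ] E} {μ : ι → ℝ}

theorem apply_eq_sum_of_apply_eq_smul (hT : ∀ i, T (e i) = μ i • e i) (x : E) :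
    T x = ∑ i, (μ i * ⟪e i, x⟫) • e i := by
  conv_lhs => rw [← e.sum_repr' x]
  simp only [map_sum, map_smul, hT, smul_smul, mul_comm]

theorem mul_norm_sq_le_inner_of_apply_eq_smul (hT : ∀ i, T (e i) = μ i • e i) {c : ℝ}
    (hc : ∀ i, c ≤ μ i) (x : E) : c * ‖x‖ ^ 2 ≤ ⟪x, T x⟫ := by
  rw [← e.sum_sq_inner_right, e.apply_eq_sum_of_apply_eq_smul hT, inner_sum, Finset.mul_sum]
  gcongr with i
  rw [real_inner_smul_right, real_inner_comm, mul_assoc, ← sq]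
  exact mul_le_mul_of_nonneg_right (hc i) (sq_nonneg _)

theorem apply_eq_smul_of_inner_eq_zero (hT : ∀ i, T (e i) = μ i • e i) {c : ℝ} {x : E}
    (hx : ∀ i, μ i ≠ c → ⟪e i, x⟫ = 0) : T x = c • x := by
  conv_rhs => rw [← e.sum_repr' x]
  rw [e.apply_eq_sum_of_apply_eq_smul hT, Finset.smul_sum]
  refine Finset.sum_congr rfl fun i _ => ?_
  rw [smul_smul]
  by_cases hi : μ i = c
  · rw [hi]
  · rw [hx i hi, mul_zero, mul_zero]

end OrthonormalBasis

namespace Matrix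

variable {n : Type*} [Fintype n] [DecidableEq n]

theorem spectrum_mul_comm {K : Type*} [Field K] (A B : Matrix n n K) :
    spectrum K (A * B) = spectrum K (B * A) := by
  ext r
  rcases eq_or_ne r 0 with rfl | hr
  · simp only [spectrum.zero_mem_iff, isUnit_iff_isUnit_det, det_mul, mul_comm]
  · simpa [hr] using congr(r ∈ $(spectrum.nonzero_mul_comm A B))

theorem IsHermitian.toEuclideanCLM_eigenvectorBasis {𝕜 : Type*} [RCLike 𝕜] {A : Matrix n n 𝕜}
    (hA : A.IsHermitian) (j : n) :
    toEuclideanCLM (𝕜 := 𝕜) A (hA.eigenvectorBasis j) =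
      hA.eigenvalues j • hA.eigenvectorBasis j := by
  ext1
  simp only [ofLp_toEuclideanCLM, hA.mulVec_eigenvectorBasis, WithLp.ofLp_smul]

theorem PosSemidef.toEuclideanCLM_sqrt_eigenvectorBasis {𝕜 : Type*} [RCLike 𝕜] [PartialOrder 𝕜]
    {A : Matrix n n 𝕜} (hA : A.PosSemidef) (j : n) :
    toEuclideanCLM (𝕜 := 𝕜) hA.sqrt (hA.1.eigenvectorBasis j) =
      √(hA.1.eigenvalues j) • hA.1.eigenvectorBasis j := by
  ext1
  simp only [ofLp_toEuclideanCLM, PosSemidef.sqrt, ← mulVec_mulVec,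
    IsHermitian.star_eigenvectorUnitary_mulVec, diagonal_mulVec_single, Function.comp_apply,
    mul_one, WithLp.ofLp_smul]
  rw [← IsHermitian.eigenvectorUnitary_mulVec, RCLike.real_smul_eq_coe_smul (K := 𝕜),
    ← mulVec_smul, ← Pi.single_smul', smul_eq_mul, mul_one]

theorem norm_toEuclideanCLM_apply_sq (M : Matrix n n ℝ) (x : EuclideanSpace ℝ n) :
    ‖toEuclideanCLM (𝕜 := ℝ) M x‖ ^ 2 = ⟪x, toEuclideanCLM (𝕜 := ℝ) (Mᴴ * M) x⟫ := by
  rw [ContinuousLinearMap.apply_norm_sq_eq_inner_adjoint_right, map_mul,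
    ← star_eq_conjTranspose, map_star, ContinuousLinearMap.star_eq_adjoint]
  rfl

end Matrix

namespace Submodule

variable {E : Type*} [NormedAddCommGroup E] [InnerProductSpace ℝ E]

theorem norm_starProjection_apply_le_of_norm_adjoint_le {F : Type*} [NormedAddCommGroup F]
    [InnerProductSpace ℝ F] [CompleteSpace E] [CompleteSpace F] (K : Submodule ℝ F)
    [K.HasOrthogonalProjection] (T : E →L[ℝ] F) {c : ℝ} (hc : 0 ≤ c)
    (hT : ∀ u ∈ K, ‖(T†) u‖ ≤ c * ‖u‖) (x : E) :
    ‖K.starProjection (T x)‖ ≤ c * ‖x‖ := by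
  set u := K.starProjection (T x)
  have hu : u ∈ K := K.starProjection_apply_mem (T x)
  have key : ‖u‖ * ‖u‖ ≤ c * ‖x‖ * ‖u‖ := calc
    ‖u‖ * ‖u‖ = ⟪T x, u⟫ := by
      rw [← real_inner_self_eq_norm_mul_norm, eq_comm, ← sub_eq_zero, ← inner_sub_left]
      exact K.starProjection_inner_eq_zero _ _ hu
    _ = ⟪x, (T†) u⟫ := (ContinuousLinearMap.adjoint_inner_right T x u).symm
    _ ≤ ‖x‖ * ‖(T†) u‖ := real_inner_le_norm _ _
    _ ≤ c * ‖x‖ * ‖u‖ := by nlinarith [hT u hu, norm_nonneg x]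
  rcases (norm_nonneg u).eq_or_lt with hu0 | hu0
  · rw [← hu0]
    positivity
  · exact le_of_mul_le_mul_right key hu0

theorem norm_mul_infDist_inv_smul_le (K : Submodule ℝ E) [K.HasOrthogonalProjection] (v : E) :
    ‖v‖ * Metric.infDist (‖v‖⁻¹ • v) K ≤ ‖Kᗮ.starProjection v‖ := by
  rcases eq_or_ne v 0 with rfl | hv
  · simp
  calc ‖v‖ * Metric.infDist (‖v‖⁻¹ • v) K
      ≤ ‖v‖ * dist (‖v‖⁻¹ • v) (‖v‖⁻¹ • K.starProjection v) := by
        gcongr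
        exact Metric.infDist_le_dist_of_mem (K.smul_mem _ (K.starProjection_apply_mem v))
    _ = ‖Kᗮ.starProjection v‖ := by
        rw [dist_smul₀, dist_eq_norm, K.starProjection_orthogonal_val, norm_inv, norm_norm,
          mul_inv_cancel_left₀ (norm_ne_zero_iff.mpr hv)]

end Submodule

section SingularValues

variable {m : ℕ} (M : Matrix (Fin m) (Fin m) ℝ)

theorem singVal_nonneg (i : Fin m) : 0 ≤ singVal M i :=
  Real.sqrt_nonneg _

theorem singVal_antitone : Antitone (singVal M) := fun _ _ hij =>
  Real.sqrt_le_sqrt (Tuple.monotone_sort _ (Fin.rev_le_rev.mpr hij))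

theorem exists_singVal_eq_sqrt_eigenvalues (k : Fin m) :
    ∃ p, singVal M p = √((Matrix.isHermitian_conjTranspose_mul_self M).eigenvalues k) :=
  ⟨((Tuple.sort (Matrix.isHermitian_conjTranspose_mul_self M).eigenvalues).symm k).rev, by
    simp [singVal]⟩

theorem exists_norm_eq_one_and_norm_toEuclideanCLM_eq_singVal (i : Fin m) :
    ∃ z : EuclideanSpace ℝ (Fin m),
      ‖z‖ = 1 ∧ ‖Matrix.toEuclideanCLM (𝕜 := ℝ) M z‖ = singVal M i := by
  set hH := Matrix.isHermitian_conjTranspose_mul_self M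
  set k := Tuple.sort hH.eigenvalues i.rev
  refine ⟨hH.eigenvectorBasis k, hH.eigenvectorBasis.orthonormal.1 k, ?_⟩
  rw [← Real.sqrt_sq (norm_nonneg _), Matrix.norm_toEuclideanCLM_apply_sq,
    hH.toEuclideanCLM_eigenvectorBasis, real_inner_smul_right, real_inner_self_eq_norm_sq,
    hH.eigenvectorBasis.orthonormal.1 k, one_pow, mul_one]
  rfl

theorem singVal_mul_norm_le {i : Fin m} (hi : (i : ℕ) = m - 1) (y : EuclideanSpace ℝ (Fin m)) :
    singVal M i * ‖y‖ ≤ ‖Matrix.toEuclideanCLM (𝕜 := ℝ) M y‖ := by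
  set hH := Matrix.isHermitian_conjTranspose_mul_self M
  have hle : ∀ k, singVal M i ^ 2 ≤ hH.eigenvalues k := fun k => by
    obtain ⟨p, hp⟩ := exists_singVal_eq_sqrt_eigenvalues M k
    have : singVal M i ≤ √(hH.eigenvalues k) :=
      hp ▸ singVal_antitone M (Fin.mk_le_mk.mpr (by omega))
    exact (Real.le_sqrt (singVal_nonneg M i)
      (Matrix.eigenvalues_conjTranspose_mul_self_nonneg M k)).mp this
  rw [← pow_le_pow_iff_left₀ (mul_nonneg (singVal_nonneg M i) (norm_nonneg _)) (norm_nonneg _)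
    two_ne_zero, mul_pow, Matrix.norm_toEuclideanCLM_apply_sq]
  exact hH.eigenvectorBasis.mul_norm_sq_le_inner_of_apply_eq_smul
    (T := (Matrix.toEuclideanCLM (𝕜 := ℝ) (Mᴴ * M)).toLinearMap)
    hH.toEuclideanCLM_eigenvectorBasis hle y

theorem exists_singVal_eq_sqrt_eigenvalues_mul_conjTranspose (j : Fin m) :
    ∃ p, singVal M p = √((Matrix.isHermitian_mul_conjTranspose_self M).eigenvalues j) := by
  have hmem := (Matrix.isHermitian_mul_conjTranspose_self M).eigenvalues_mem_spectrum_real j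
  rw [Matrix.spectrum_mul_comm,
    (Matrix.isHermitian_conjTranspose_mul_self M).spectrum_real_eq_range_eigenvalues] at hmem
  obtain ⟨k, hk⟩ := hmem
  rw [← hk]
  exact exists_singVal_eq_sqrt_eigenvalues M k

/-- An eigenvector of `M Mᴴ` whose eigenvalue is not `σ_m(M)²` has its singular value among the
first `m - 1`, so it lies in `Usub M (m - 1)`. -/
theorem toEuclideanCLM_mul_conjTranspose_apply_of_mem_orthogonal_Usub {i : Fin m}
    (hi : (i : ℕ) = m - 1) {u : EuclideanSpace ℝ (Fin m)} (hu : u ∈ (Usub M (m - 1))ᗮ) :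
    Matrix.toEuclideanCLM (𝕜 := ℝ) (M * Mᴴ) u = singVal M i ^ 2 • u := by
  set hP := Matrix.posSemidef_self_mul_conjTranspose M
  refine hP.1.eigenvectorBasis.apply_eq_smul_of_inner_eq_zero
    (T := (Matrix.toEuclideanCLM (𝕜 := ℝ) (M * Mᴴ)).toLinearMap)
    hP.1.toEuclideanCLM_eigenvectorBasis fun j hj => ?_
  obtain ⟨p, hp⟩ := exists_singVal_eq_sqrt_eigenvalues_mul_conjTranspose M j
  have hpi : (p : ℕ) < m - 1 := by
    refine lt_of_le_of_ne (by omega) fun hpi => hj ?_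
    rw [← Real.sq_sqrt (Matrix.eigenvalues_self_mul_conjTranspose_nonneg M j), ← hp,
      Fin.ext (hpi.trans hi.symm)]
  refine Submodule.inner_right_of_mem_orthogonal ?_ hu
  refine Submodule.mem_iSup_of_mem p (Submodule.mem_iSup_of_mem hpi ?_)
  rw [Module.End.mem_eigenspace_iff, hp]
  exact hP.toEuclideanCLM_sqrt_eigenvectorBasis j

theorem norm_adjoint_toEuclideanCLM_apply_of_mem_orthogonal_Usub {i : Fin m}
    (hi : (i : ℕ) = m - 1) {u : EuclideanSpace ℝ (Fin m)} (hu : u ∈ (Usub M (m - 1))ᗮ) :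
    ‖((Matrix.toEuclideanCLM (𝕜 := ℝ) M)†) u‖ = singVal M i * ‖u‖ := by
  rw [← ContinuousLinearMap.star_eq_adjoint, ← map_star, Matrix.star_eq_conjTranspose,
    ← pow_left_inj₀ (norm_nonneg _) (mul_nonneg (singVal_nonneg M i) (norm_nonneg _)) two_ne_zero,
    Matrix.norm_toEuclideanCLM_apply_sq, Matrix.conjTranspose_conjTranspose,
    toEuclideanCLM_mul_conjTranspose_apply_of_mem_orthogonal_Usub M hi hu, real_inner_smul_right,
    real_inner_self_eq_norm_sq, mul_pow]

end SingularValues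

theorem singVal_mul_singVal_inv_le_one {m : ℕ} (A : GL (Fin m) ℝ) (i : Fin m) {j : Fin m}
    (hj : (j : ℕ) = m - 1) : singVal (↑A : Matrix (Fin m) (Fin m) ℝ) i * singVal ↑A⁻¹ j ≤ 1 := by
  obtain ⟨z, hz, hAz⟩ := exists_norm_eq_one_and_norm_toEuclideanCLM_eq_singVal (↑A) i
  have h := singVal_mul_norm_le (↑A⁻¹) hj (Matrix.toEuclideanCLM (𝕜 := ℝ) ↑A z)
  rwa [← mul_apply_eq_comp, ← map_mul, Units.inv_mul, map_one, one_apply_eq_self, hz, hAz,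
    mul_comm] at h

/-- If `w` is a unit vector attaining `‖Bw‖ = ‖B‖` and `α` is the angle between the
line spanned by `Bw` and the hyperplane `S_{m−1}(A)` (so that `sin α` is the distance
of the unit vector `Bw/‖Bw‖` from `S_{m−1}(A)`), then `‖AB‖ ≥ σ₁(A)·‖B‖·sin α`. -/
theorem norm_mul_ge_of_angle {m : ℕ} (hm : 2 ≤ m) (A B : GL (Fin m) ℝ)
    (w : EuclideanSpace ℝ (Fin m)) (hw : ‖w‖ = 1)
    (hmax : ‖Matrix.toEuclideanCLM (𝕜 := ℝ) ((↑B : Matrix (Fin m) (Fin m) ℝ)) w‖ =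
      ‖Matrix.toEuclideanCLM (𝕜 := ℝ) ((↑B : Matrix (Fin m) (Fin m) ℝ))‖) :
    singVal ((↑A : Matrix (Fin m) (Fin m) ℝ)) ⟨0, by omega⟩ *
        ‖Matrix.toEuclideanCLM (𝕜 := ℝ) ((↑B : Matrix (Fin m) (Fin m) ℝ))‖ *
        Metric.infDist
          ((‖Matrix.toEuclideanCLM (𝕜 := ℝ) ((↑B : Matrix (Fin m) (Fin m) ℝ)) w‖)⁻¹ •
            Matrix.toEuclideanCLM (𝕜 := ℝ) ((↑B : Matrix (Fin m) (Fin m) ℝ)) w)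
          ((Shyp A : Set (EuclideanSpace ℝ (Fin m)))) ≤
      ‖Matrix.toEuclideanCLM (𝕜 := ℝ)
        ((↑A : Matrix (Fin m) (Fin m) ℝ) * (↑B : Matrix (Fin m) (Fin m) ℝ))‖ := by
  set MA : Matrix (Fin m) (Fin m) ℝ := ↑A
  set MB : Matrix (Fin m) (Fin m) ℝ := ↑B
  set σ := singVal MA ⟨0, by omega⟩
  set lam := singVal (↑A⁻¹ : Matrix (Fin m) (Fin m) ℝ) ⟨m - 1, by omega⟩
  set v := Matrix.toEuclideanCLM (𝕜 := ℝ) MB w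
  set x := Matrix.toEuclideanCLM (𝕜 := ℝ) (MA * MB) w
  have hxv : Matrix.toEuclideanCLM (𝕜 := ℝ) (↑A⁻¹ : Matrix (Fin m) (Fin m) ℝ) x = v := by
    rw [← mul_apply_eq_comp, ← map_mul, ← mul_assoc, Units.inv_mul, one_mul]
  have hσlam : σ * lam ≤ 1 := singVal_mul_singVal_inv_le_one A _ rfl
  have hproj : ‖(Shyp A)ᗮ.starProjection v‖ ≤ lam * ‖x‖ := by
    rw [← hxv]
    exact Submodule.norm_starProjection_apply_le_of_norm_adjoint_le _ _ (singVal_nonneg _ _)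
      (fun u hu => (norm_adjoint_toEuclideanCLM_apply_of_mem_orthogonal_Usub _ rfl hu).le) x
  have hx : ‖x‖ ≤ ‖Matrix.toEuclideanCLM (𝕜 := ℝ) (MA * MB)‖ := by
    simpa only [hw, mul_one] using (Matrix.toEuclideanCLM (𝕜 := ℝ) (MA * MB)).le_opNorm w
  calc σ * ‖Matrix.toEuclideanCLM (𝕜 := ℝ) MB‖ * Metric.infDist (‖v‖⁻¹ • v) (Shyp A)
      = σ * (‖v‖ * Metric.infDist (‖v‖⁻¹ • v) (Shyp A)) := by rw [hmax, mul_assoc]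
    _ ≤ σ * (lam * ‖x‖) := mul_le_mul_of_nonneg_left
      (((Shyp A).norm_mul_infDist_inv_smul_le v).trans hproj) (singVal_nonneg _ _)
    _ ≤ ‖x‖ := by nlinarith [norm_nonneg x]
    _ ≤ _ := hx
end

section
/- Let Γ be a countable group acting on a space ∂Γ, let c(x,ξ) and č(x,ξ) be real-valued cocycles on Γ × ∂Γ (i.e., c(xy,ξ) = c(y,x^{−1}ξ) + c(x,ξ)), let μ and μ̌ be finite Borel measures on ∂Γ with dx_*μ/dμ(ξ) = exp(−c(x,ξ)) and dx_*μ̌/dμ̌(ξ) = exp(−č(x,ξ)), and suppose [·|·]_o: ∂²Γ → ℝ is a locally bounded Borel function satisfying [x^{−1}ξ|x^{−1}η]_o − [ξ|η]_o = č(x,ξ) + c(x,η) (Gromov product identity) for all x ∈ Γ, (ξ,η) ∈ ∂²Γ. Then the measure Λ := exp([ξ|η]_o) μ̌ ⊗ μ on ∂²Γ is invariant under the diagonal Γ-action. -/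
open MeasureTheory
open scoped ENNReal

/-- Let `Γ` act measurably on a space `∂Γ` (here `α`), let `c`, `cdual` be real cocycles,
`μ`, `ν` finite Borel measures with `d(x_*μ)/dμ = exp(−c(x,·))` and
`d(x_*ν)/dν = exp(−cdual(x,·))`, and let `G = [·|·]_o` be a Borel function on the
off-diagonal satisfying the Gromov product identity
`G(x⁻¹ξ, x⁻¹η) − G(ξ,η) = cdual(x,ξ) + c(x,η)`. Then the measure
`Λ = exp(G) · (ν ⊗ μ)` on `∂²Γ` is invariant under the diagonal action. -/
theorem gromov_density_measure_invariant
    {Γ α : Type*} [Group Γ] [MeasurableSpace α] [MulAction Γ α]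
    (hact : ∀ x : Γ, Measurable fun ξ : α => x • ξ)
    (c cdual : Γ → α → ℝ)
    (hcmeas : ∀ x : Γ, Measurable (c x)) (hcdualmeas : ∀ x : Γ, Measurable (cdual x))
    (hccoc : ∀ (x y : Γ) (ξ : α), c (x * y) ξ = c y (x⁻¹ • ξ) + c x ξ)
    (hcdualcoc : ∀ (x y : Γ) (ξ : α), cdual (x * y) ξ = cdual y (x⁻¹ • ξ) + cdual x ξ)
    (μ ν : Measure α) [IsFiniteMeasure μ] [IsFiniteMeasure ν]
    (hμ : ∀ x : Γ, μ.map (fun ξ => x • ξ) =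
      μ.withDensity fun ξ => ENNReal.ofReal (Real.exp (-(c x ξ))))
    (hν : ∀ x : Γ, ν.map (fun ξ => x • ξ) =
      ν.withDensity fun ξ => ENNReal.ofReal (Real.exp (-(cdual x ξ))))
    (G : α × α → ℝ) (hGmeas : Measurable G)
    (hG : ∀ (x : Γ) (ξ η : α), ξ ≠ η →
      G (x⁻¹ • ξ, x⁻¹ • η) - G (ξ, η) = cdual x ξ + c x η) :
    ∀ x : Γ,
      Measure.map (fun p : α × α => (x • p.1, x • p.2))
        (((ν.prod μ).restrict {p : α × α | p.1 ≠ p.2}).withDensity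
          fun p => ENNReal.ofReal (Real.exp (G p))) =
      ((ν.prod μ).restrict {p : α × α | p.1 ≠ p.2}).withDensity
        fun p => ENNReal.ofReal (Real.exp (G p)) := by
  intro x
  have hsm : ∀ y : Γ, Measurable (fun p : α × α => (y • p.1, y • p.2)) := fun y =>
    ((hact y).comp measurable_fst).prodMk ((hact y).comp measurable_snd)
  set P : Measure (α × α) := ν.prod μ with hP
  set D : Set (α × α) := {p : α × α | p.1 ≠ p.2} with hD
  set e : α × α → α × α := fun p : α × α => (x • p.1, x • p.2) with he
  set h : α × α → ℝ≥0∞ := fun p => ENNReal.ofReal (Real.exp (G p)) with hh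
  set fν : α → ℝ≥0∞ := fun ξ => ENNReal.ofReal (Real.exp (-(cdual x ξ))) with hfν
  set fμ : α → ℝ≥0∞ := fun ξ => ENNReal.ofReal (Real.exp (-(c x ξ))) with hfμ
  set w : α × α → ℝ≥0∞ := fun p => fν p.1 * fμ p.2 with hw
  have hfνm : Measurable fν := (Real.measurable_exp.comp (hcdualmeas x).neg).ennreal_ofReal
  have hfμm : Measurable fμ := (Real.measurable_exp.comp (hcmeas x).neg).ennreal_ofReal

  have hhmeas : Measurable h := (Real.measurable_exp.comp hGmeas).ennreal_ofReal
  have hwmeas : Measurable w := (hfνm.comp measurable_fst).mul (hfμm.comp measurable_snd)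
  -- finiteness of the withDensity measures
  haveI hfin1 : IsFiniteMeasure (ν.withDensity fν) := by
    rw [← hν x]
    exact ⟨by rw [Measure.map_apply (hact x) MeasurableSet.univ]; exact measure_lt_top _ _⟩
  haveI hfin2 : IsFiniteMeasure (μ.withDensity fμ) := by
    rw [← hμ x]
    exact ⟨by rw [Measure.map_apply (hact x) MeasurableSet.univ]; exact measure_lt_top _ _⟩
  -- product of the densities
  have hprodwd : (ν.withDensity fν).prod (μ.withDensity fμ) = P.withDensity w := by
    refine Measure.prod_eq fun s t hs ht => ?_
    rw [withDensity_apply _ (hs.prod ht), withDensity_apply _ hs, withDensity_apply _ ht,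
      ← lintegral_indicator (hs.prod ht) _, ← lintegral_indicator hs _, ← lintegral_indicator ht _,
      ← lintegral_prod_mul ((hfνm.indicator hs).aemeasurable) ((hfμm.indicator ht).aemeasurable)]
    refine lintegral_congr fun p => ?_
    by_cases h1 : p.1 ∈ s <;> by_cases h2 : p.2 ∈ t <;>
      simp [Set.indicator, Set.mem_prod, h1, h2, hw]
  have hmap1 : P.map e = P.withDensity w := by
    have : P.map e = (ν.map fun ξ => x • ξ).prod (μ.map fun ξ => x • ξ) := by
      rw [Measure.map_prod_map _ _ (hact x) (hact x)]
      rfl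
    rw [this, hμ x, hν x, hprodwd]
  -- a measurable e-invariant hull of D
  have hDfin : P D ≠ ⊤ := measure_ne_top P D
  set D' : Set (α × α) := toMeasurable P D with hD'
  have hD'meas : MeasurableSet D' := measurableSet_toMeasurable P D
  set S : Set (α × α) := ⋂ n : ℤ, (fun p : α × α => ((x ^ n) • p.1, (x ^ n) • p.2)) ⁻¹' D' with hS
  have hSmeas : MeasurableSet S := MeasurableSet.iInter fun n => hD'meas.preimage (hsm (x ^ n))
  have hDS : D ⊆ S := by
    intro p hp
    refine Set.mem_iInter.2 fun n => subset_toMeasurable P D ?_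
    simp only [hD, Set.mem_preimage, Set.mem_setOf_eq] at hp ⊢
    exact fun hEq => hp (smul_left_cancel (x ^ n) hEq)
  have hSD' : S ⊆ D' := by
    intro p hp
    have h0 := Set.mem_iInter.1 hp 0
    simpa using h0
  have hRS : P.restrict D = P.restrict S := by
    refine le_antisymm (Measure.restrict_mono hDS le_rfl) ?_
    calc P.restrict S ≤ P.restrict D' := Measure.restrict_mono hSD' le_rfl
      _ = P.restrict D := Measure.restrict_toMeasurable hDfin
  have key : ∀ (n : ℤ) (ξ : α), (x ^ n) • (x • ξ) = (x ^ (n + 1)) • ξ := by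
    intro n ξ; rw [smul_smul, ← zpow_add_one]
  have hSinv : e ⁻¹' S = S := by
    ext p
    simp only [hS, Set.mem_preimage, Set.mem_iInter, he, key]
    constructor
    · intro H n
      have := H (n - 1)
      simpa using this
    · intro H n
      exact H (n + 1)
  -- transformation of the restricted product measure
  have hmapR : (P.restrict S).map e = (P.restrict S).withDensity w := by
    have h1 := Measure.restrict_map (hsm x) hSmeas (μ := P)
    rw [hSinv] at h1
    rw [← h1, hmap1, restrict_withDensity hSmeas]
  set g : α × α → α × α := fun q : α × α => (x⁻¹ • q.1, x⁻¹ • q.2) with hg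
  have hgm : Measurable g := hsm x⁻¹
  have hge : ∀ p : α × α, g (e p) = p := fun p => by
    simp [hg, he, inv_smul_smul]
  -- change of variables for the withDensity measure
  have hmapΛ : ((P.restrict S).withDensity h).map e
      = (P.restrict S).withDensity (fun q => w q * h (g q)) := by
    have hhg : Measurable fun q : α × α => h (g q) := hhmeas.comp hgm
    ext A hA
    rw [Measure.map_apply (hsm x) hA, withDensity_apply _ (hA.preimage (hsm x)),
      withDensity_apply _ hA]
    have step1 : ∫⁻ p in e ⁻¹' A, h p ∂(P.restrict S)
        = ∫⁻ q in A, h (g q) ∂((P.restrict S).map e) := by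
      rw [setLIntegral_map hA hhg (hsm x)]
      refine lintegral_congr fun p => ?_
      rw [hge]
    rw [step1, hmapR,
      setLIntegral_withDensity_eq_setLIntegral_mul _ hwmeas hhg hA]
    rfl
  -- the transformed density agrees with h off the diagonal
  have hcongr : (P.restrict S).withDensity (fun q => w q * h (g q))
      = (P.restrict S).withDensity h := by
    apply withDensity_congr_ae
    have hEm : MeasurableSet {q : α × α | ¬ w q * h (g q) = h q} := by
      have h1 : Measurable fun q => w q * h (g q) := hwmeas.mul (hhmeas.comp hgm)
      have : {q : α × α | ¬ w q * h (g q) = h q}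
          = {q | w q * h (g q) < h q} ∪ {q | h q < w q * h (g q)} := by
        ext q
        simp only [Set.mem_setOf_eq, Set.mem_union]
        exact ⟨fun hne => lt_or_gt_of_ne hne, fun hlt => hlt.elim ne_of_lt ne_of_gt⟩
      rw [this]
      exact (measurableSet_lt h1 hhmeas).union (measurableSet_lt hhmeas h1)
    have hsub : {q : α × α | ¬ w q * h (g q) = h q} ⊆ Dᶜ := by
      intro q hq hqD
      apply hq
      have hqne : q.1 ≠ q.2 := hqD
      have hGq := hG x q.1 q.2 hqne
      have hgq : G (g q) = G (q.1, q.2) + (cdual x q.1 + c x q.2) := by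
        rw [← hGq]; simp [hg]
      have : w q * h (g q)
          = ENNReal.ofReal (Real.exp (-(cdual x q.1)) * Real.exp (-(c x q.2)) * Real.exp (G (g q))) := by
        rw [ENNReal.ofReal_mul (by positivity), ENNReal.ofReal_mul (by positivity)]
      rw [this, hgq]
      rw [← Real.exp_add, ← Real.exp_add]
      have harith : -(cdual x q.1) + -(c x q.2) + (G (q.1, q.2) + (cdual x q.1 + c x q.2))
          = G (q.1, q.2) := by ring
      rw [harith, hh]
    rw [Filter.EventuallyEq, ae_iff]
    have : (P.restrict S) {q : α × α | ¬ w q * h (g q) = h q} = 0 := by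
      rw [← hRS, Measure.restrict_apply hEm]
      have hempty : {q : α × α | ¬ w q * h (g q) = h q} ∩ D = ∅ := by
        rw [Set.eq_empty_iff_forall_notMem]
        exact fun q hq => hsub hq.1 hq.2
      rw [hempty, measure_empty]
    exact this
  rw [hRS, hmapΛ, hcongr]
end

section
/- Let Γ be a group, Γ' ⊆ Γ a subset, and B ⊆ Γ a finite set with B Γ' B = Γ. Let f: Γ → ℝ and g: Γ → ℝ≥0 be functions satisfying the bounds |f(b x b') − f(x)| ≤ K_B and |g(b x b') − g(x)| ≤ K_B for all x ∈ Γ, b,b' ∈ B (for some constant K_B depending on B). Then the series Σ_{x∈Γ} e^{−f(x) − s g(x)} and Σ_{x∈Γ'} e^{−f(x) − s g(x)} have the same abscissa of convergence in s. (Instance: f = v̂·d̂(o,·) for a left-invariant metric d̂, g = |·|_S a word norm, Γ' the set of group elements represented by paths in a recurrent component of an automaton; then the divergence exponents of P̂(t) = Σ_Γ e^{−v̂d̂(o,x)−t|x|_S} and P̂_C(t) = Σ_{Γ'} e^{−v̂d̂(o,x)−t|x|_S} coincide.) -/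
/-- If `Γ' ⊆ Γ`, `B` is finite with `BΓ'B = Γ`, and `f`, `g` change by at most a
constant under multiplying by elements of `B` on both sides (`g` nonnegative), then
for the weights `e^{−f(x)−s·g(x)}` the series over `Γ` and over `Γ'` have the same
abscissa of convergence in `s`. -/
theorem abscissa_eq_of_finite_sandwich {Γ : Type*} [Group Γ]
    (Γ' : Set Γ) (B : Finset Γ)
    (f g : Γ → ℝ) (hg0 : ∀ x, 0 ≤ g x) (K : ℝ)
    (hsurj : ∀ x : Γ, ∃ b ∈ B, ∃ b' ∈ B, ∃ y ∈ Γ', x = b * y * b')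
    (hf : ∀ x : Γ, ∀ b ∈ B, ∀ b' ∈ B, |f (b * x * b') - f x| ≤ K)
    (hgK : ∀ x : Γ, ∀ b ∈ B, ∀ b' ∈ B, |g (b * x * b') - g x| ≤ K) :
    sInf {s : ℝ | Summable fun x : Γ => Real.exp (-f x - s * g x)} =
      sInf {s : ℝ | Summable fun x : Γ' => Real.exp (-f x.1 - s * g x.1)} := by
  have key : ∀ s : ℝ,
      (Summable fun x : Γ => Real.exp (-f x - s * g x)) ↔
        (Summable fun x : Γ' => Real.exp (-f x.1 - s * g x.1)) := by
    intro s
    constructor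
    · intro h
      exact h.subtype Γ'
    · intro h
      choose b hb b' hb' y hy hxy using hsurj
      set C : ℝ := Real.exp (K + |s| * K) with hC
      -- the comparison function on the product type
      have hG : Summable (fun p : (↥B × ↥B) × Γ' =>
          C * Real.exp (-f p.2.1 - s * g p.2.1)) := by
        refine (summable_prod_of_nonneg ?_).2 ⟨?_, ?_⟩
        · intro p; positivity
        · intro x; exact h.mul_left C
        · exact Summable.of_finite
      set Φ : Γ → (↥B × ↥B) × Γ' :=
        fun x => ((⟨b x, hb x⟩, ⟨b' x, hb' x⟩), ⟨y x, hy x⟩) with hΦdef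
      have hΦinj : Function.Injective Φ := by
        intro x1 x2 hx
        simp only [hΦdef, Prod.mk.injEq, Subtype.mk.injEq] at hx
        rw [hxy x1, hxy x2, hx.1.1, hx.1.2, hx.2]
      have hcomp : Summable ((fun p : (↥B × ↥B) × Γ' =>
          C * Real.exp (-f p.2.1 - s * g p.2.1)) ∘ Φ) :=
        hG.comp_injective hΦinj
      refine Summable.of_nonneg_of_le (fun x => (Real.exp_pos _).le) ?_ hcomp
      intro x
      show Real.exp (-f x - s * g x) ≤ C * Real.exp (-f (y x) - s * g (y x))
      rw [hC, ← Real.exp_add]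
      apply Real.exp_le_exp.2
      have h1 : |f (b x * y x * b' x) - f (y x)| ≤ K := hf (y x) _ (hb x) _ (hb' x)
      have h2 : |g (b x * y x * b' x) - g (y x)| ≤ K := hgK (y x) _ (hb x) _ (hb' x)
      rw [← hxy x] at h1 h2
      have h1' : f (y x) - f x ≤ K := by
        have := abs_le.1 h1; linarith [this.1]
      have h2' : -s * (g x - g (y x)) ≤ |s| * K := by
        calc -s * (g x - g (y x)) ≤ |(-s) * (g x - g (y x))| := le_abs_self _
          _ = |s| * |g x - g (y x)| := by rw [abs_mul, abs_neg]
          _ ≤ |s| * K := by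
              exact mul_le_mul_of_nonneg_left h2 (abs_nonneg s)
      nlinarith [h2']
  exact congrArg sInf (Set.ext fun s => key s)
end

section
/- Let Γ be a hyperbolic group with a fixed δ-hyperbolic word metric, and let x ∈ Γ be an infinite order element such that γ(z) := ∪_{n∈ℤ} z^n[o,z] is a (c₀,c₁)-quasi-geodesic for all z in a set U(x^{−1},x,R) with constants c₀,c₁ depending only on x, R, δ. Then for all large L > 0 there is a constant C (depending on x, R, L, δ) such that for every positive integer k and every z ∈ U(x^{−1},x,R) with |z| = k, the set C_k(z;x,L,R) := {g⟨z⟩ ∈ Γ/⟨z⟩ : gzg^{−1} ∈ U(x^{−1},x,R), ||z| − k| ≤ L} has cardinality at most C·k. -/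
noncomputable def wordNorm {Γ : Type*} [Group Γ] (S : Set Γ) (x : Γ) : ℕ :=
  sInf {n | ∃ l : List Γ, l.length = n ∧ (∀ s ∈ l, s ∈ S) ∧ l.prod = x}

noncomputable def wordDist {Γ : Type*} [Group Γ] (S : Set Γ) (x y : Γ) : ℝ :=
  (wordNorm S (x⁻¹ * y) : ℝ)

noncomputable def gpW {Γ : Type*} [Group Γ] (S : Set Γ) (w x y : Γ) : ℝ :=
  (wordDist S w x + wordDist S w y - wordDist S x y) / 2

/-- `O(z,w,R) = {y : (z|y)_w ≤ R}`. -/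
def Oset {Γ : Type*} [Group Γ] (S : Set Γ) (z w : Γ) (R : ℝ) : Set Γ :=
  {y | gpW S w z y ≤ R}

/-- `U(x⁻¹,x,R) = {z : z⁻¹ ∈ O(o,x⁻¹,R), z ∈ O(o,x,R)}`. -/
def Uset {Γ : Type*} [Group Γ] (S : Set Γ) (x : Γ) (R : ℝ) : Set Γ :=
  {z | z⁻¹ ∈ Oset S 1 x⁻¹ R ∧ z ∈ Oset S 1 x R}

/-!
Morse lemma, in a δ-hyperbolic space with discrete geodesics: a point `p` of a geodesic at
maximal distance `E` from a quasi-geodesic sees a detour along the quasi-geodesic of length `O(E)`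
that stays at distance `E` from `p`, while hyperbolicity puts such a detour within `δ log₂` of its
length of `p`; hence `E` is bounded.

For `z` and `w = g z g⁻¹` with quasi-geodesic axes through `1`, the points `w^{±n}` of the axis of
`w` are `|g|`-close to `g z^{±n}`. For large `n` hyperbolicity transfers the bounded Gromov product
`(w^{-n} | w^n)_1` to `(g z^{-n} | g z^n)_1`, so `1` is near a geodesic from `g z^{-n}` to `g z^n`,
hence (Morse) near the translated axis `g γ(z)`, and `g⁻¹` is near some `z^j [1, z]`. So the
coset `g⟨z⟩` is `u p(r)⁻¹ ⟨z⟩` with `u` in a ball of fixed radius and `p(r)` one of the `k + 1`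
points of a geodesic `[1, z]`.
-/

open Filter Asymptotics in
theorem exists_forall_two_pow_le_imp_le (a b : ℝ) :
    ∃ C : ℕ, ∀ c : ℕ, (2 : ℝ) ^ c ≤ a * c + b → c ≤ C := by
  have h : (fun c : ℕ => a * c + b) =o[atTop] fun c => (2 : ℝ) ^ c :=
    ((isLittleO_coe_const_pow_of_one_lt one_lt_two).const_mul_left a).add
      (isLittleO_const_left.2 (Or.inr (tendsto_norm_atTop_atTop.comp
        (tendsto_pow_atTop_atTop_of_one_lt one_lt_two))))
  obtain ⟨C, hC⟩ := eventually_atTop.1 (h.bound one_half_pos)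
  refine ⟨C, fun c hc => ?_⟩
  by_contra! hlt
  have hbound := hC c hlt.le
  rw [Real.norm_eq_abs, Real.norm_eq_abs, abs_of_pos (by positivity : (0 : ℝ) < 2 ^ c)] at hbound
  linarith [le_abs_self (a * c + b), (by positivity : (0 : ℝ) < 2 ^ c)]

theorem Nat.two_pow_clog_two_le (N : ℕ) : 2 ^ Nat.clog 2 N ≤ 2 * N + 1 := by
  rcases le_or_gt N 1 with h | h
  · simp [Nat.clog_of_right_le_one h]
  · have hlt := Nat.pow_pred_clog_lt_self one_lt_two h
    rw [← Nat.succ_pred_eq_of_pos (Nat.clog_pos one_lt_two h), pow_succ]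
    omega

theorem exists_le_and_le_add_of_le_of_le (f : ℕ → ℝ) {T : ℕ} {s J : ℝ} (hJ : 0 ≤ J)
    (h0 : f 0 ≤ s) (hT : s ≤ f T) (hstep : ∀ i < T, f (i + 1) ≤ f i + J) :
    ∃ i ≤ T, s ≤ f i ∧ f i ≤ s + J := by
  induction T with
  | zero => exact ⟨0, le_rfl, hT, by linarith⟩
  | succ T ih =>
    by_cases hs : s ≤ f T
    · obtain ⟨i, hi, h⟩ := ih hs fun i hi => hstep i (by omega)
      exact ⟨i, by omega, h⟩
    · exact ⟨T + 1, le_rfl, hT, by linarith [hstep T (by omega)]⟩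

section GromovProduct

variable {X : Type*} [PseudoMetricSpace X]

noncomputable def gromovProduct (w x y : X) : ℝ :=
  (dist w x + dist w y - dist x y) / 2

theorem gromovProduct_comm (w x y : X) : gromovProduct w x y = gromovProduct w y x := by
  simp only [gromovProduct, dist_comm x y, add_comm (dist w x)]

theorem gromovProduct_self (w x : X) : gromovProduct w x x = dist w x := by
  simp [gromovProduct]

theorem gromovProduct_le_add_dist (w w' x y : X) :
    gromovProduct w x y ≤ gromovProduct w' x y + dist w w' := by
  unfold gromovProduct
  linarith [dist_triangle w w' x, dist_triangle w w' y]

theorem abs_gromovProduct_sub_le (w x y y' : X) :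
    |gromovProduct w x y - gromovProduct w x y'| ≤ dist y y' := by
  unfold gromovProduct
  rw [abs_le]
  constructor <;> linarith [dist_triangle w y y', dist_triangle w y' y, dist_triangle x y y',
    dist_triangle x y' y, dist_comm y y']

theorem gromovProduct_le_dist (w x y : X) : gromovProduct w x y ≤ dist w x := by
  unfold gromovProduct
  linarith [dist_triangle w x y]

theorem dist_sub_dist_le_gromovProduct (w x y : X) :
    dist w x - dist x y ≤ gromovProduct w x y := by
  unfold gromovProduct
  linarith [dist_triangle w x y, dist_comm x y, dist_triangle w y x]

theorem sub_half_le_gromovProduct {w x y : X} {E K : ℝ} (hx : E ≤ dist w x) (hy : E ≤ dist w y)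
    (hxy : dist x y ≤ K) : E - K / 2 ≤ gromovProduct w x y := by
  unfold gromovProduct
  linarith

def IsGromovHyperbolic (X : Type*) [PseudoMetricSpace X] (δ : ℝ) : Prop :=
  ∀ x y z w : X, min (gromovProduct w x z) (gromovProduct w z y) - δ ≤ gromovProduct w x y

def IsGeodesicSegment (q : ℕ → X) (T : ℕ) : Prop :=
  ∀ i j, i ≤ j → j ≤ T → dist (q i) (q j) = (j : ℝ) - i

def IsQuasiGeodesic (c₀ c₁ : ℝ) (α : ℤ → X) : Prop :=
  ∀ i j : ℤ, c₀⁻¹ * |(i : ℝ) - (j : ℝ)| - c₁ ≤ dist (α i) (α j) ∧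
    dist (α i) (α j) ≤ c₀ * |(i : ℝ) - (j : ℝ)| + c₁

theorem IsQuasiGeodesic.abs_sub_le {c₀ c₁ : ℝ} {α : ℤ → X} (hα : IsQuasiGeodesic c₀ c₁ α)
    (hc₀ : 0 < c₀) (i j : ℤ) : |(i : ℝ) - j| ≤ c₀ * (dist (α i) (α j) + c₁) := by
  calc |(i : ℝ) - j| = c₀ * (c₀⁻¹ * |(i : ℝ) - j|) := by field_simp
    _ ≤ c₀ * (dist (α i) (α j) + c₁) := by gcongr; linarith [(hα i j).1]

theorem IsGeodesicSegment.comp {Y : Type*} [PseudoMetricSpace Y] {q : ℕ → X} {T : ℕ}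
    (hq : IsGeodesicSegment q T) {f : X → Y} (hf : Isometry f) : IsGeodesicSegment (f ∘ q) T :=
  fun i j hij hj => (hf.dist_eq _ _).trans (hq i j hij hj)

theorem isGeodesicSegment_of_dist_succ_le {q : ℕ → X} {T : ℕ}
    (hstep : ∀ i < T, dist (q i) (q (i + 1)) ≤ 1) (hT : dist (q 0) (q T) = T) :
    IsGeodesicSegment q T := by
  have hle : ∀ i j, i ≤ j → j ≤ T → dist (q i) (q j) ≤ (j : ℝ) - i := fun i j hij hj =>
    (dist_le_Ico_sum_dist q hij).trans <| by
      simpa [Nat.cast_sub hij] using Finset.sum_le_card_nsmul (Finset.Ico i j) _ 1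
        fun k hk => hstep k (by simp at hk; omega)
  intro i j hij hj
  refine le_antisymm (hle i j hij hj) ?_
  have := dist_triangle4 (q 0) (q i) (q j) (q T)
  linarith [hle 0 i (Nat.zero_le i) (hij.trans hj), hle j T hj le_rfl]

theorem IsGeodesicSegment.gromovProduct_eq_zero {q : ℕ → X} {T : ℕ} (hq : IsGeodesicSegment q T)
    {i j l : ℕ} (hij : i ≤ j) (hjl : j ≤ l) (hl : l ≤ T) :
    gromovProduct (q j) (q i) (q l) = 0 := by
  rw [gromovProduct, dist_comm, hq i j hij (hjl.trans hl), hq j l hjl hl,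
    hq i l (hij.trans hjl) hl]
  ring

theorem IsQuasiGeodesic.exists_abs_sub_le_of_forall_near {c₀ c₁ : ℝ} {α : ℤ → X}
    (hα : IsQuasiGeodesic c₀ c₁ α) (hc₀ : 0 < c₀) {q : ℕ → X} {T : ℕ}
    (hq : IsGeodesicSegment q T) {a b : ℤ} (hqa : q 0 = α a) (hqb : q T = α b) {D : ℝ}
    (hD : 0 ≤ D) (hnear : ∀ i ≤ T, ∃ t : ℤ, dist (q i) (α t) ≤ D) {s : ℤ} (has : a ≤ s)
    (hsb : s ≤ b) :
    ∃ i ≤ T, ∃ t : ℤ, |(s : ℝ) - t| ≤ c₀ * (2 * D + 1 + c₁) ∧ dist (q i) (α t) ≤ D := by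
  have hc₁ : 0 ≤ c₁ := by simpa using (hα 0 0).1
  rcases T.eq_zero_or_pos with rfl | hT
  · have hba := hα.abs_sub_le hc₀ b a
    rw [← hqa, ← hqb, dist_self, zero_add] at hba
    refine ⟨0, le_rfl, a, ?_, by rw [hqa, dist_self]; exact hD⟩
    have : (s : ℝ) - a ≤ b - a := by push_cast [sub_le_sub_iff_right]; exact_mod_cast hsb
    rw [abs_of_nonneg (by simpa using has)]
    nlinarith [le_abs_self ((b : ℝ) - a)]
  -- parameters along `α` of nearby points of the geodesic, pinned to `a` and `b` at its ends
  choose! τ hτ using hnear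
  set f : ℕ → ℤ := fun i => if i = 0 then a else if i = T then b else τ i
  have hf : ∀ i ≤ T, dist (q i) (α (f i)) ≤ D := by
    intro i hi
    by_cases h0 : i = 0
    · simp [f, h0, hqa, hD]
    by_cases hiT : i = T
    · simp [f, hiT, hqb, hT.ne', hD]
    simpa [f, h0, hiT] using hτ i hi
  have hstep : ∀ i < T, ((f (i + 1) : ℤ) : ℝ) ≤ f i + c₀ * (2 * D + 1 + c₁) := by
    intro i hi
    have h1 := hq i (i + 1) (by omega) hi
    push_cast at h1
    have : dist (α (f (i + 1))) (α (f i)) ≤ 2 * D + 1 := by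
      linarith [dist_triangle4 (α (f (i + 1))) (q (i + 1)) (q i) (α (f i)), hf i (by omega),
        hf (i + 1) hi, dist_comm (α (f (i + 1))) (q (i + 1)), dist_comm (q (i + 1)) (q i)]
    linarith [le_abs_self ((f (i + 1) : ℝ) - f i), hα.abs_sub_le hc₀ (f (i + 1)) (f i),
      mul_le_mul_of_nonneg_left this hc₀.le]
  obtain ⟨i, hi, h₁, h₂⟩ := exists_le_and_le_add_of_le_of_le (fun i => (f i : ℝ))
    (s := s) (by positivity) (by simpa [f] using has) (by simpa [f, hT.ne'] using hsb) hstep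
  exact ⟨i, hi, f i, abs_le.2 ⟨by linarith, by linarith⟩, hf i hi⟩

end GromovProduct

namespace IsGromovHyperbolic

variable {X : Type*} [PseudoMetricSpace X] {δ c₀ c₁ : ℝ}

theorem min_min_sub_two_mul_le (hX : IsGromovHyperbolic X δ) (hδ : 0 ≤ δ) (w x x' y' y : X) :
    min (min (gromovProduct w x x') (gromovProduct w x' y')) (gromovProduct w y' y) - 2 * δ ≤
      gromovProduct w x y := by
  have h₁ := hX x y x' w
  have h₂ := hX x' y y' w
  rcases min_choice (gromovProduct w x x') (gromovProduct w x' y) with h | h <;> rw [h] at h₁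
  · linarith [min_le_left (min (gromovProduct w x x') (gromovProduct w x' y'))
      (gromovProduct w y' y), min_le_left (gromovProduct w x x') (gromovProduct w x' y')]
  · linarith [min_le_min (min_le_right (gromovProduct w x x') (gromovProduct w x' y'))
      (le_refl (gromovProduct w y' y))]

theorem le_gromovProduct_of_chain (hX : IsGromovHyperbolic X δ) (hδ : 0 ≤ δ) (w : X) {m : ℝ} :
    ∀ (c N : ℕ) (x : ℕ → X), 1 ≤ N → N ≤ 2 ^ c →
      (∀ i < N, m ≤ gromovProduct w (x i) (x (i + 1))) →
      m - δ * c ≤ gromovProduct w (x 0) (x N) := by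
  intro c
  induction c with
  | zero =>
    intro N x h1 h2 hx
    obtain rfl : N = 1 := by simp at h2; omega
    simpa using hx 0 one_pos
  | succ c ih =>
    intro N x h1 h2 hx
    by_cases hN : N ≤ 2 ^ c
    · push_cast
      nlinarith [ih N x h1 hN hx]
    · have hl := ih (2 ^ c) x Nat.one_le_two_pow le_rfl fun i hi => hx i (by omega)
      have hr := ih (N - 2 ^ c) (fun i => x (2 ^ c + i)) (by omega) (by rw [pow_succ] at h2; omega)
        fun i hi => by simpa [add_assoc] using hx (2 ^ c + i) (by omega)
      rw [add_zero, Nat.add_sub_cancel' (by omega)] at hr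
      push_cast
      linarith [le_min hl hr, hX (x 0) (x N) (x (2 ^ c)) w]

theorem exists_dist_le_gromovProduct_add (hX : IsGromovHyperbolic X δ) {q : ℕ → X} {T : ℕ}
    (hq : IsGeodesicSegment q T) (p : X) :
    ∃ i ≤ T, dist p (q i) ≤ gromovProduct p (q 0) (q T) + 2 * δ + 2 := by
  set f : ℕ → ℝ := fun i => gromovProduct p (q T) (q i) - gromovProduct p (q 0) (q i)
  have hstep : ∀ i < T, f (i + 1) ≤ f i + 2 := by
    intro i hi
    have h := hq i (i + 1) (by omega) hi
    push_cast at h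
    have h₁ := abs_le.1 (abs_gromovProduct_sub_le p (q T) (q (i + 1)) (q i))
    have h₂ := abs_le.1 (abs_gromovProduct_sub_le p (q 0) (q (i + 1)) (q i))
    rw [dist_comm] at h₁ h₂
    simp only [f]
    linarith
  -- `f` crosses `0` in steps `≤ 2`; at the crossing `(q 0 | q i)_p` and `(q i | q T)_p` are
  -- `2`-close, so hyperbolicity bounds both by `(q 0 | q T)_p + δ + 2`
  obtain ⟨i, hi, hfi₀, hfi₂⟩ := exists_le_and_le_add_of_le_of_le f (s := 0) zero_le_two
    (by simp only [f, gromovProduct_self, gromovProduct_comm p (q T)]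
        linarith [gromovProduct_le_dist p (q 0) (q T)])
    (by simp only [f, gromovProduct_self]
        linarith [gromovProduct_le_dist p (q T) (q 0), gromovProduct_comm p (q T) (q 0)])
    hstep
  refine ⟨i, hi, ?_⟩
  have hsum : gromovProduct p (q 0) (q i) + gromovProduct p (q i) (q T) =
      dist p (q i) + gromovProduct p (q 0) (q T) := by
    have h₁ := hq 0 i (Nat.zero_le i) hi
    have h₂ := hq i T hi le_rfl
    have h₃ := hq 0 T (Nat.zero_le T) le_rfl
    simp only [gromovProduct]
    push_cast at h₁ h₃
    linarith
  have hhyp := hX (q 0) (q T) (q i) p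
  simp only [f, gromovProduct_comm p (q T)] at hfi₀ hfi₂
  rw [min_eq_left (by linarith)] at hhyp
  linarith

theorem sub_le_gromovProduct_of_le_dist (hX : IsGromovHyperbolic X δ) (hδ : 0 ≤ δ)
    (hc : 0 ≤ c₀ + c₁) {α : ℤ → X} (hα : IsQuasiGeodesic c₀ c₁ α) {w : X} {E : ℝ} {t₁ t₂ : ℤ}
    (hfar : ∀ t ∈ Set.uIcc t₁ t₂, E ≤ dist w (α t)) :
    E - (c₀ + c₁) / 2 - δ * Nat.clog 2 (t₂ - t₁).natAbs ≤ gromovProduct w (α t₁) (α t₂) := by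
  wlog h : t₁ ≤ t₂ generalizing t₁ t₂
  · rw [gromovProduct_comm, ← Int.natAbs_neg, neg_sub]
    exact this (Set.uIcc_comm t₁ t₂ ▸ hfar) (le_of_not_ge h)
  obtain ⟨N, rfl⟩ : ∃ N : ℕ, t₂ = t₁ + N := ⟨(t₂ - t₁).toNat, by omega⟩
  rw [add_sub_cancel_left, Int.natAbs_natCast]
  have hfar' : ∀ i ≤ N, E ≤ dist w (α (t₁ + i)) := fun i hi =>
    hfar _ (Set.mem_uIcc_of_le (by omega) (by omega))
  rcases N.eq_zero_or_pos with rfl | hN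
  · have h0 := hfar' 0 le_rfl
    simp only [Nat.cast_zero, add_zero, Nat.clog_zero_right, mul_zero, sub_zero,
      gromovProduct_self] at h0 ⊢
    linarith
  · simpa using hX.le_gromovProduct_of_chain hδ w (Nat.clog 2 N) N (fun i => α (t₁ + i)) hN
      (Nat.le_pow_clog one_lt_two N) fun i hi =>
        sub_half_le_gromovProduct (hfar' i hi.le) (hfar' (i + 1) hi) <| by
          simpa [add_sub_add_left_eq_sub] using (hα (t₁ + i) (t₁ + (i + 1 : ℕ))).2

/-- `q j₀` is a point of the geodesic farthest from `α '' [a, b]`, at distance `E`. The detour of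
`α` between points near `q (j₀ ∓ ⌈E⌉₊)` has length `O(E)` and stays `E`-far from `q j₀`, so
`E ≲ δ log₂ (length)`. -/
theorem exists_two_pow_le_of_farthest (hX : IsGromovHyperbolic X δ) (hδ : 0 ≤ δ) (hc₀ : 0 < c₀)
    (hc₁ : 0 ≤ c₁) {α : ℤ → X} (hα : IsQuasiGeodesic c₀ c₁ α) {q : ℕ → X} {T : ℕ}
    (hq : IsGeodesicSegment q T) {a b : ℤ} (hab : a ≤ b) (hqa : q 0 = α a) (hqb : q T = α b)
    {j₀ : ℕ} (hj₀ : j₀ ≤ T) {E : ℝ} (hfar : ∀ t ∈ Finset.Icc a b, E ≤ dist (q j₀) (α t))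
    (hnear : ∀ i ≤ T, ∃ t ∈ Finset.Icc a b, dist (q i) (α t) ≤ E) :
    ∃ c : ℕ, (2 : ℝ) ^ c ≤ 2 * c₀ * (4 * E + 2 + c₁) + 1 ∧
      (E ≤ 4 * δ ∨ E ≤ (c₀ + c₁) / 2 + 2 * δ + δ * c) := by
  have hE : 0 ≤ E := by
    obtain ⟨t, -, ht⟩ := hnear j₀ hj₀
    exact dist_nonneg.trans ht
  -- where the subtraction or the `min` truncates, `q j₁ = α a` or `q j₂ = α b` is `E`-far anyway
  set n := ⌈E⌉₊
  set j₁ := j₀ - n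
  set j₂ := min T (j₀ + n)
  have hfar₁ : E ≤ dist (q j₀) (q j₁) := by
    rcases le_total n j₀ with h | h
    · rw [dist_comm, hq _ _ (Nat.sub_le j₀ n) hj₀, Nat.cast_sub h]
      linarith [Nat.le_ceil E]
    · rw [show j₁ = 0 by omega, hqa]
      exact hfar a (Finset.left_mem_Icc.2 hab)
  have hfar₂ : E ≤ dist (q j₀) (q j₂) := by
    rcases le_total T (j₀ + n) with h | h
    · rw [show j₂ = T from min_eq_left h, hqb]
      exact hfar b (Finset.right_mem_Icc.2 hab)
    · rw [show j₂ = j₀ + n from min_eq_right h, hq _ _ (by omega) h]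
      push_cast
      linarith [Nat.le_ceil E]
  have h₁₂ : dist (q j₁) (q j₂) ≤ 2 * E + 2 := by
    rw [hq _ _ (by omega) (min_le_left _ _)]
    have : j₂ ≤ j₁ + 2 * n := by omega
    have : (j₂ : ℝ) ≤ j₁ + 2 * n := by exact_mod_cast this
    linarith [Nat.ceil_lt_add_one hE]
  obtain ⟨t₁, ht₁, hd₁⟩ := hnear j₁ (by omega)
  obtain ⟨t₂, ht₂, hd₂⟩ := hnear j₂ (min_le_left _ _)
  set N := (t₂ - t₁).natAbs
  have hN : (N : ℝ) ≤ c₀ * (4 * E + 2 + c₁) := by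
    rw [Nat.cast_natAbs, Int.cast_abs, Int.cast_sub]
    refine (hα.abs_sub_le hc₀ t₂ t₁).trans (mul_le_mul_of_nonneg_left ?_ hc₀.le)
    linarith [dist_triangle4 (α t₂) (q j₂) (q j₁) (α t₁), dist_comm (α t₂) (q j₂),
      dist_comm (q j₂) (q j₁)]
  refine ⟨Nat.clog 2 N, ?_, ?_⟩
  · have : (2 : ℝ) ^ Nat.clog 2 N ≤ 2 * N + 1 := by exact_mod_cast Nat.two_pow_clog_two_le N
    linarith
  · have hmid := hX.sub_le_gromovProduct_of_le_dist hδ (by positivity) hα (t₁ := t₁) (t₂ := t₂)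
      (w := q j₀) fun t ht => hfar t <| by
        rw [Finset.mem_Icc] at ht₁ ht₂ ⊢
        rcases Set.mem_uIcc.1 ht with h | h <;> omega
    have h4 := hX.min_min_sub_two_mul_le hδ (q j₀) (q j₁) (α t₁) (α t₂) (q j₂)
    rw [hq.gromovProduct_eq_zero (Nat.sub_le j₀ n) (le_min hj₀ (Nat.le_add_right j₀ n))
      (min_le_left T _), gromovProduct_comm _ (α t₂)] at h4
    by_contra! h
    have := lt_min (lt_min
      ((by linarith : 2 * δ < E - E / 2).trans_le
        (sub_half_le_gromovProduct hfar₁ (hfar t₁ ht₁) hd₁))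
      ((by linarith : 2 * δ < _).trans_le hmid))
      ((by linarith : 2 * δ < E - E / 2).trans_le
        (sub_half_le_gromovProduct hfar₂ (hfar t₂ ht₂) hd₂))
    linarith

theorem exists_geodesic_near_quasiGeodesic (hX : IsGromovHyperbolic X δ) (hδ : 0 ≤ δ)
    (hc₀ : 0 < c₀) (hc₁ : 0 ≤ c₁) :
    ∃ D, ∀ (α : ℤ → X) (a b : ℤ) (q : ℕ → X) (T : ℕ), IsQuasiGeodesic c₀ c₁ α →
      IsGeodesicSegment q T → q 0 = α a → q T = α b → a ≤ b →
      ∀ i ≤ T, ∃ t ∈ Finset.Icc a b, dist (q i) (α t) ≤ D := by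
  set A := (c₀ + c₁) / 2 + 2 * δ
  obtain ⟨C, hC⟩ := exists_forall_two_pow_le_imp_le (8 * c₀ * δ) (2 * c₀ * (4 * A + 2 + c₁) + 1)
  refine ⟨max (4 * δ) (A + δ * C), fun α a b q T hα hq hqa hqb hab => ?_⟩
  have hne : (Finset.Icc a b).Nonempty := Finset.nonempty_Icc.2 hab
  set f : ℕ → ℝ := fun i => (Finset.Icc a b).inf' hne fun t => dist (q i) (α t)
  obtain ⟨j₀, hj₀, hmax⟩ := (Finset.range (T + 1)).exists_max_image f ⟨0, by simp⟩
  have hnear : ∀ i ≤ T, ∃ t ∈ Finset.Icc a b, dist (q i) (α t) ≤ f j₀ := fun i hi =>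
    let ⟨t, ht, hft⟩ := (Finset.Icc a b).exists_mem_eq_inf' hne fun t => dist (q i) (α t)
    ⟨t, ht, hft ▸ hmax i (Finset.mem_range.2 (by omega))⟩
  obtain ⟨c, hpow, hE⟩ := hX.exists_two_pow_le_of_farthest hδ hc₀ hc₁ hα hq hab hqa hqb
    (Nat.lt_succ_iff.1 (Finset.mem_range.1 hj₀)) (fun t ht => Finset.inf'_le _ ht) hnear
  have hED : f j₀ ≤ max (4 * δ) (A + δ * C) := by
    rcases hE with h | h
    · exact h.trans (le_max_left _ _)
    · have hA : f j₀ ≤ A + δ * c := h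
      have hcC : c ≤ C := hC c <| hpow.trans <| by
        linarith [mul_le_mul_of_nonneg_left hA (by positivity : (0 : ℝ) ≤ 8 * c₀)]
      have : δ * c ≤ δ * C := mul_le_mul_of_nonneg_left (by exact_mod_cast hcC) hδ
      exact le_max_of_le_right (by linarith)
  intro i hi
  obtain ⟨t, ht, hd⟩ := hnear i hi
  exact ⟨t, ht, hd.trans hED⟩

theorem exists_quasiGeodesic_near_geodesic (hX : IsGromovHyperbolic X δ) (hδ : 0 ≤ δ)
    (hc₀ : 0 < c₀) (hc₁ : 0 ≤ c₁) :
    ∃ D, ∀ (α : ℤ → X) (a b : ℤ) (q : ℕ → X) (T : ℕ), IsQuasiGeodesic c₀ c₁ α →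
      IsGeodesicSegment q T → q 0 = α a → q T = α b →
      ∀ s ∈ Finset.Icc a b, ∃ i ≤ T, dist (α s) (q i) ≤ D := by
  obtain ⟨D₁, hD₁⟩ := hX.exists_geodesic_near_quasiGeodesic hδ hc₀ hc₁
  set J := c₀ * (2 * D₁ + 1 + c₁)
  refine ⟨c₀ * J + c₁ + D₁, fun α a b q T hα hq hqa hqb s hs => ?_⟩
  rw [Finset.mem_Icc] at hs
  have hnear := hD₁ α a b q T hα hq hqa hqb (hs.1.trans hs.2)
  have hD₁ : 0 ≤ D₁ := by
    obtain ⟨t, -, ht⟩ := hnear 0 (Nat.zero_le T)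
    exact dist_nonneg.trans ht
  obtain ⟨i, hi, t, hst, hqt⟩ := hα.exists_abs_sub_le_of_forall_near hc₀ hq hqa hqb hD₁
    (fun i hi => (hnear i hi).imp fun _ => And.right) hs.1 hs.2
  refine ⟨i, hi, ?_⟩
  calc dist (α s) (q i) ≤ dist (α s) (α t) + dist (q i) (α t) :=
        (dist_triangle _ _ _).trans_eq (by rw [dist_comm (α t)])
    _ ≤ c₀ * J + c₁ + D₁ := by
        gcongr
        exact (hα s t).2.trans (by gcongr)

theorem exists_gromovProduct_quasiGeodesic_le (hX : IsGromovHyperbolic X δ) (hδ : 0 ≤ δ)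
    (hc₀ : 0 < c₀) (hc₁ : 0 ≤ c₁)
    (hgeod : ∀ x y : X, ∃ (q : ℕ → X) (T : ℕ), q 0 = x ∧ q T = y ∧ IsGeodesicSegment q T) :
    ∃ D, ∀ (α : ℤ → X) (a s b : ℤ), IsQuasiGeodesic c₀ c₁ α → a ≤ s → s ≤ b →
      gromovProduct (α s) (α a) (α b) ≤ D := by
  obtain ⟨D₂, hD₂⟩ := hX.exists_quasiGeodesic_near_geodesic hδ hc₀ hc₁
  refine ⟨D₂, fun α a s b hα has hsb => ?_⟩
  obtain ⟨q, T, hqa, hqb, hq⟩ := hgeod (α a) (α b)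
  obtain ⟨i, hi, hd⟩ := hD₂ α a b q T hα hq hqa hqb s (Finset.mem_Icc.2 ⟨has, hsb⟩)
  have h0 := hq.gromovProduct_eq_zero (Nat.zero_le i) hi le_rfl
  rw [hqa, hqb] at h0
  linarith [gromovProduct_le_add_dist (α s) (q i) (α a) (α b)]

end IsGromovHyperbolic

namespace IsGromovHyperbolic

variable {Γ : Type*} [Group Γ] [PseudoMetricSpace Γ] {δ c₀ c₁ : ℝ}

theorem exists_gromovProduct_zpow_mul_le (hX : IsGromovHyperbolic Γ δ) (hδ : 0 ≤ δ)
    (hc₀ : 0 < c₀) (hc₁ : 0 ≤ c₁)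
    (hgeod : ∀ x y : Γ, ∃ (q : ℕ → Γ) (T : ℕ), q 0 = x ∧ q T = y ∧ IsGeodesicSegment q T)
    (hiso : ∀ g : Γ, Isometry (g * ·)) :
    ∃ D, ∀ (w h : Γ) (m : ℕ) (γ : ℤ → Γ), 0 < m → IsQuasiGeodesic c₀ c₁ γ →
      (∀ n : ℤ, γ (n * m) = w ^ n) →
      ∃ n : ℕ, gromovProduct 1 (w ^ (-n : ℤ) * h) (w ^ (n : ℤ) * h) ≤ D := by
  obtain ⟨D₃, hD₃⟩ := hX.exists_gromovProduct_quasiGeodesic_le hδ hc₀ hc₁ hgeod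
  refine ⟨D₃ + 2 * δ, fun w h m γ hm hγ hγw => ?_⟩
  have hγ0 : γ 0 = 1 := by simpa using hγw 0
  set n := ⌈c₀ * (D₃ + 2 * δ + c₁ + dist 1 h + 1)⌉₊
  have hn : D₃ + 2 * δ + c₁ + dist 1 h + 1 ≤ c₀⁻¹ * n := by
    rw [le_inv_mul_iff₀ hc₀]
    exact Nat.le_ceil _
  have hfar : ∀ ν : ℤ, |ν| = n → D₃ + 2 * δ < gromovProduct 1 (w ^ ν) (w ^ ν * h) := by
    intro ν hν
    have h₁ := (hγ 0 (ν * m)).1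
    rw [hγ0, hγw] at h₁
    have habs : |((0 : ℤ) : ℝ) - ((ν * m : ℤ) : ℝ)| = n * m := by
      rw [Int.cast_zero, zero_sub, abs_neg, ← Int.cast_abs, abs_mul, hν]
      simp
    have hnm : (n : ℝ) ≤ n * m := le_mul_of_one_le_right (Nat.cast_nonneg n) (by exact_mod_cast hm)
    have h₂ : dist (w ^ ν) (w ^ ν * h) = dist 1 h := by
      simpa using (hiso (w ^ ν)).dist_eq 1 h
    have h₃ := dist_sub_dist_le_gromovProduct 1 (w ^ ν) (w ^ ν * h)
    rw [habs] at h₁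
    nlinarith [mul_le_mul_of_nonneg_left hnm (inv_nonneg.2 hc₀.le)]
  refine ⟨n, not_lt.1 fun hlt => ?_⟩
  have hmid := hD₃ γ (-n * m) 0 (n * m) hγ
    (by rw [neg_mul]; exact neg_nonpos.2 (by positivity)) (by positivity)
  rw [hγ0, hγw, hγw] at hmid
  have h4 := hX.min_min_sub_two_mul_le hδ 1 (w ^ (-n : ℤ)) (w ^ (-n : ℤ) * h) (w ^ (n : ℤ) * h)
    (w ^ (n : ℤ))
  rw [gromovProduct_comm 1 (w ^ (n : ℤ) * h)] at h4
  have := lt_min (lt_min (hfar (-n) (by simp)) hlt) (hfar n (by simp))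
  linarith

theorem exists_dist_inv_quasiGeodesic_le (hX : IsGromovHyperbolic Γ δ) (hδ : 0 ≤ δ)
    (hc₀ : 0 < c₀) (hc₁ : 0 ≤ c₁)
    (hgeod : ∀ x y : Γ, ∃ (q : ℕ → Γ) (T : ℕ), q 0 = x ∧ q T = y ∧ IsGeodesicSegment q T)
    (hiso : ∀ g : Γ, Isometry (g * ·)) :
    ∃ D, ∀ (z g : Γ) (k m : ℕ) (γ γ' : ℤ → Γ), 0 < m →
      IsQuasiGeodesic c₀ c₁ γ → (∀ n : ℤ, γ (n * k) = z ^ n) →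
      IsQuasiGeodesic c₀ c₁ γ' → (∀ n : ℤ, γ' (n * m) = (g * z * g⁻¹) ^ n) →
      ∃ t, dist g⁻¹ (γ t) ≤ D := by
  obtain ⟨D₄, hD₄⟩ := hX.exists_gromovProduct_zpow_mul_le hδ hc₀ hc₁ hgeod hiso
  obtain ⟨D₁, hD₁⟩ := hX.exists_geodesic_near_quasiGeodesic hδ hc₀ hc₁
  refine ⟨D₄ + 2 * δ + 2 + D₁, fun z g k m γ γ' hm hγ hγz hγ' hγ'w => ?_⟩
  obtain ⟨n, hn⟩ := hD₄ (g * z * g⁻¹) g m γ' hm hγ' hγ'w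
  simp only [conj_zpow, inv_mul_cancel_right] at hn
  obtain ⟨q, T, hq0, hqT, hq⟩ := hgeod (z ^ (-n : ℤ)) (z ^ (n : ℤ))
  obtain ⟨i, hi, hdi⟩ := hX.exists_dist_le_gromovProduct_add (hq.comp (hiso g)) 1
  simp only [Function.comp_apply, hq0, hqT] at hdi
  obtain ⟨t, -, ht⟩ := hD₁ γ (-n * k) (n * k) q T hγ hq (by rw [hq0, hγz]) (by rw [hqT, hγz])
    (by rw [neg_mul]; exact neg_le_self (by positivity)) i hi
  have hgi : dist g⁻¹ (q i) = dist 1 (g * q i) := by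
    simpa using ((hiso g).dist_eq g⁻¹ (q i)).symm
  exact ⟨t, (dist_triangle g⁻¹ (q i) (γ t)).trans (by linarith)⟩

theorem exists_dist_zpow_mul_le (hX : IsGromovHyperbolic Γ δ) (hδ : 0 ≤ δ) (hc₀ : 0 < c₀)
    (hc₁ : 0 ≤ c₁) (hiso : ∀ g : Γ, Isometry (g * ·)) :
    ∃ D, ∀ (z : Γ) (k : ℕ) (γ : ℤ → Γ) (p : ℕ → Γ), 0 < k → IsQuasiGeodesic c₀ c₁ γ →
      (∀ n : ℤ, γ (n * k) = z ^ n) → IsGeodesicSegment p k → p 0 = 1 → p k = z →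
      ∀ t, ∃ (j : ℤ) (r : ℕ), r ≤ k ∧ dist (γ t) (z ^ j * p r) ≤ D := by
  obtain ⟨D₂, hD₂⟩ := hX.exists_quasiGeodesic_near_geodesic hδ hc₀ hc₁
  refine ⟨D₂, fun z k γ p hk hγ hγz hp hp0 hpk t => ?_⟩
  have hk' : (0 : ℤ) < k := by exact_mod_cast hk
  obtain ⟨r, hr, hd⟩ := hD₂ γ (t / k * k) ((t / k + 1) * k) ((z ^ (t / k) * ·) ∘ p) k hγ
    (hp.comp (hiso _)) (by simp [hp0, hγz]) (by simp [hpk, hγz, zpow_add_one])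
    t (Finset.mem_Icc.2 ⟨Int.ediv_mul_le t hk'.ne', (Int.lt_ediv_add_one_mul_self t hk').le⟩)
  exact ⟨t / k, r, hr, hd⟩

theorem exists_dist_inv_zpow_mul_le (hX : IsGromovHyperbolic Γ δ) (hδ : 0 ≤ δ)
    (hc₀ : 0 < c₀) (hc₁ : 0 ≤ c₁)
    (hgeod : ∀ x y : Γ, ∃ (q : ℕ → Γ) (T : ℕ), q 0 = x ∧ q T = y ∧ IsGeodesicSegment q T)
    (hiso : ∀ g : Γ, Isometry (g * ·)) :
    ∃ D, ∀ (z g : Γ) (k m : ℕ) (γ γ' : ℤ → Γ) (p : ℕ → Γ), 0 < k →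
      IsQuasiGeodesic c₀ c₁ γ → (∀ n : ℤ, γ (n * k) = z ^ n) →
      IsQuasiGeodesic c₀ c₁ γ' → (∀ n : ℤ, γ' (n * m) = (g * z * g⁻¹) ^ n) →
      IsGeodesicSegment p k → p 0 = 1 → p k = z →
      ∃ (j : ℤ) (r : ℕ), r ≤ k ∧ dist g⁻¹ (z ^ j * p r) ≤ D := by
  obtain ⟨D, hD⟩ := hX.exists_dist_inv_quasiGeodesic_le hδ hc₀ hc₁ hgeod hiso
  obtain ⟨D', hD'⟩ := hX.exists_dist_zpow_mul_le hδ hc₀ hc₁ hiso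
  refine ⟨D + D', fun z g k m γ γ' p hk hγ hγz hγ' hγ'w hp hp0 hpk => ?_⟩
  have hm : 0 < m := by
    refine Nat.pos_of_ne_zero fun hm => ?_
    have h₁ := hγ'w 1
    have h₀ := hγ'w 0
    simp only [hm, Nat.cast_zero, mul_zero, zpow_zero, zpow_one] at h₁ h₀
    have hk0 := hp 0 k (Nat.zero_le k) le_rfl
    rw [hp0, hpk, conj_eq_one_iff.1 (h₁.symm.trans h₀), dist_self] at hk0
    simp at hk0
    exact hk.ne' (by exact_mod_cast hk0.symm)
  obtain ⟨t, ht⟩ := hD z g k m γ γ' hm hγ hγz hγ' hγ'w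
  obtain ⟨j, r, hr, hd⟩ := hD' z k γ p hk hγ hγz hp hp0 hpk t
  exact ⟨j, r, hr, (dist_triangle _ _ _).trans (add_le_add ht hd)⟩

end IsGromovHyperbolic

theorem ncard_setOf_mk_le {Γ : Type*} [Group Γ] (z : Γ) (P : Γ → Prop) (B : Finset Γ)
    (p : ℕ → Γ) (k : ℕ) (h : ∀ g, P g → ∃ (j : ℤ) (r : ℕ), r ≤ k ∧ g * (z ^ j * p r) ∈ B) :
    {q : Γ ⧸ Subgroup.zpowers z | ∃ g : Γ,
      (QuotientGroup.mk g : Γ ⧸ Subgroup.zpowers z) = q ∧ P g}.ncard ≤ B.card * (k + 1) := by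
  classical
  calc _ ≤ ((B ×ˢ Finset.range (k + 1)).image fun ur =>
        (QuotientGroup.mk (ur.1 * (p ur.2)⁻¹) : Γ ⧸ Subgroup.zpowers z)).card := by
        rw [← Set.ncard_coe_finset]
        refine Set.ncard_le_ncard ?_ (Finset.finite_toSet _)
        rintro _ ⟨g, rfl, hg⟩
        obtain ⟨j, r, hr, hB⟩ := h g hg
        apply Finset.mem_coe.2
        refine Finset.mem_image.2 ⟨(g * (z ^ j * p r), r),
          Finset.mem_product.2 ⟨hB, Finset.mem_range.2 (by omega)⟩, QuotientGroup.eq.2 ?_⟩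
        convert (Subgroup.zpowers z).zpow_mem (Subgroup.mem_zpowers z) (-j) using 1
        group
    _ ≤ (B ×ˢ Finset.range (k + 1)).card := Finset.card_image_le
    _ = B.card * (k + 1) := by simp

section WordMetric

variable {Γ : Type*} [Group Γ] {S : Set Γ}

theorem wordNorm_le_length {g : Γ} {l : List Γ} (hl : ∀ s ∈ l, s ∈ S) (hg : l.prod = g) :
    wordNorm S g ≤ l.length :=
  Nat.sInf_le ⟨l, rfl, hl, hg⟩

theorem wordNorm_one : wordNorm S (1 : Γ) = 0 :=
  Nat.le_zero.1 (wordNorm_le_length (l := []) (by simp) rfl)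

variable (hSsym : ∀ s ∈ S, s⁻¹ ∈ S) (hSgen : Subgroup.closure S = ⊤)
include hSsym hSgen

theorem exists_length_eq_wordNorm (g : Γ) :
    ∃ l : List Γ, l.length = wordNorm S g ∧ (∀ s ∈ l, s ∈ S) ∧ l.prod = g := by
  have hg : g ∈ Submonoid.closure (S ∪ S⁻¹) := by
    rw [← Subgroup.closure_toSubmonoid, hSgen]
    trivial
  rw [Set.union_eq_left.2 fun s hs => by simpa using hSsym _ hs] at hg
  obtain ⟨l, hl, hprod⟩ := Submonoid.exists_list_of_mem_closure hg
  exact Nat.sInf_mem (s := {n | ∃ l : List Γ, l.length = n ∧ (∀ s ∈ l, s ∈ S) ∧ l.prod = g})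
    ⟨l.length, l, rfl, hl, hprod⟩

theorem wordNorm_mul_le (a b : Γ) : wordNorm S (a * b) ≤ wordNorm S a + wordNorm S b := by
  obtain ⟨la, hla, hSa, rfl⟩ := exists_length_eq_wordNorm hSsym hSgen a
  obtain ⟨lb, hlb, hSb, rfl⟩ := exists_length_eq_wordNorm hSsym hSgen b
  rw [← hla, ← hlb, ← List.length_append, ← List.prod_append]
  exact wordNorm_le_length (fun s hs => (List.mem_append.1 hs).elim (hSa s) (hSb s)) rfl

theorem wordNorm_inv (a : Γ) : wordNorm S a⁻¹ = wordNorm S a := by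
  suffices h : ∀ a : Γ, wordNorm S a⁻¹ ≤ wordNorm S a from
    le_antisymm (h a) (by simpa using h a⁻¹)
  intro a
  obtain ⟨l, hl, hS, rfl⟩ := exists_length_eq_wordNorm hSsym hSgen a
  calc wordNorm S l.prod⁻¹ ≤ (l.map (·⁻¹)).reverse.length :=
        wordNorm_le_length (by simpa using fun s hs => by simpa using hSsym _ (hS _ hs))
          (List.prod_inv_reverse l).symm
    _ = wordNorm S l.prod := by simp [hl]

noncomputable abbrev wordMetric : PseudoMetricSpace Γ where
  dist := wordDist S
  dist_self x := by simp [wordDist, wordNorm_one]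
  dist_comm x y := by
    rw [wordDist, wordDist, ← wordNorm_inv hSsym hSgen, mul_inv_rev, inv_inv]
  dist_triangle x y z := by
    simpa [wordDist, mul_assoc] using
      (Nat.cast_le (α := ℝ)).2 (wordNorm_mul_le hSsym hSgen (x⁻¹ * y) (y⁻¹ * z))

theorem isometry_mul_left_wordMetric (g : Γ) :
    letI := wordMetric hSsym hSgen
    Isometry (g * ·) := by
  let := wordMetric hSsym hSgen
  refine Isometry.of_dist_eq fun a b => ?_
  change wordDist S _ _ = wordDist S _ _
  simp [wordDist, mul_assoc]

theorem exists_isGeodesicSegment_one_wordMetric (g : Γ) :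
    letI := wordMetric hSsym hSgen
    ∃ q : ℕ → Γ, q 0 = 1 ∧ q (wordNorm S g) = g ∧ IsGeodesicSegment q (wordNorm S g) := by
  let := wordMetric hSsym hSgen
  obtain ⟨l, hl, hS, hprod⟩ := exists_length_eq_wordNorm hSsym hSgen g
  refine ⟨fun i => (l.take i).prod, by simp, by simp [← hl, hprod], ?_⟩
  refine isGeodesicSegment_of_dist_succ_le (fun i hi => ?_) ?_
  · change (wordNorm S ((l.take i).prod⁻¹ * (l.take (i + 1)).prod) : ℝ) ≤ 1
    rw [List.prod_take_succ l i (by omega), inv_mul_cancel_left]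
    exact_mod_cast wordNorm_le_length (l := [l[i]]) (by simpa using hS _ (List.getElem_mem _))
      (by simp)
  · change (wordNorm S ((l.take 0).prod⁻¹ * (l.take (wordNorm S g)).prod) : ℝ) = wordNorm S g
    simp [← hl, hprod]

theorem exists_isGeodesicSegment_wordMetric (x y : Γ) :
    letI := wordMetric hSsym hSgen
    ∃ (q : ℕ → Γ) (T : ℕ), q 0 = x ∧ q T = y ∧ IsGeodesicSegment q T := by
  let := wordMetric hSsym hSgen
  obtain ⟨q, hq0, hqT, hq⟩ := exists_isGeodesicSegment_one_wordMetric hSsym hSgen (x⁻¹ * y)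
  exact ⟨(x * ·) ∘ q, _, by simp [hq0], by simp [hqT],
    hq.comp (isometry_mul_left_wordMetric hSsym hSgen x)⟩

theorem finite_setOf_wordNorm_le (hSfin : S.Finite) (n : ℕ) :
    {g : Γ | wordNorm S g ≤ n}.Finite := by
  have := hSfin.to_subtype
  refine ((List.finite_length_le S n).image fun l => (l.map Subtype.val).prod).subset
    fun g hg => ?_
  obtain ⟨l, hl, hS, rfl⟩ := exists_length_eq_wordNorm hSsym hSgen g
  lift l to List S using hS
  change wordNorm S _ ≤ n at hg
  rw [← hl] at hg
  exact ⟨l, by simpa using hg, by simp⟩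

end WordMetric

theorem conjugacy_coset_count_general {Γ : Type*} [Group Γ]
    (S : Set Γ) (hSfin : S.Finite) (hSsym : ∀ s ∈ S, s⁻¹ ∈ S)
    (hSgen : Subgroup.closure S = ⊤)
    (δ : ℝ) (hδ : 0 ≤ δ)
    (hhyp : ∀ x y z w : Γ, min (gpW S w x z) (gpW S w z y) - δ ≤ gpW S w x y)
    (x : Γ) (R : ℝ)
    (c₀ c₁ : ℝ) (hc₀ : 0 < c₀) (hc₁ : 0 ≤ c₁)
    (hqg : ∀ z ∈ Uset S x R, ∃ γ : ℤ → Γ, γ 0 = 1 ∧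
      (∀ n : ℤ, γ (n * (wordNorm S z : ℤ)) = z ^ n) ∧
      ∀ i j : ℤ, c₀⁻¹ * |(i : ℝ) - (j : ℝ)| - c₁ ≤ wordDist S (γ i) (γ j) ∧
        wordDist S (γ i) (γ j) ≤ c₀ * |(i : ℝ) - (j : ℝ)| + c₁) :
    ∀ L : ℝ, 0 < L → ∃ C : ℝ, 0 < C ∧
      ∀ (k : ℕ) (z : Γ), 0 < k → z ∈ Uset S x R → wordNorm S z = k →
        Set.ncard {q : Γ ⧸ Subgroup.zpowers z | ∃ g : Γ,
            (QuotientGroup.mk g : Γ ⧸ Subgroup.zpowers z) = q ∧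
            g * z * g⁻¹ ∈ Uset S x R ∧ |(wordNorm S z : ℝ) - (k : ℝ)| ≤ L} ≤
          C * k := by
  intro L _
  let := wordMetric hSsym hSgen
  obtain ⟨D, hD⟩ := IsGromovHyperbolic.exists_dist_inv_zpow_mul_le hhyp hδ hc₀ hc₁
    (exists_isGeodesicSegment_wordMetric hSsym hSgen) (isometry_mul_left_wordMetric hSsym hSgen)
  obtain ⟨B, hB⟩ := (finite_setOf_wordNorm_le hSsym hSgen hSfin ⌈D⌉₊).exists_finset
  refine ⟨2 * (B.card + 1), by positivity, fun k z hk hz hzk => ?_⟩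
  obtain ⟨p, hp0, hpz, hp⟩ := exists_isGeodesicSegment_one_wordMetric hSsym hSgen z
  obtain ⟨γ, -, hγz, hγ⟩ := hqg z hz
  rw [hzk] at hpz hp hγz
  have hcount := ncard_setOf_mk_le z
    (fun g => g * z * g⁻¹ ∈ Uset S x R ∧ |(wordNorm S z : ℝ) - k| ≤ L) B p k fun g hg => by
    obtain ⟨γ', -, hγ'w, hγ'⟩ := hqg _ hg.1
    obtain ⟨j, r, hr, hd⟩ := hD z g k _ γ γ' p hk hγ hγz hγ' hγ'w hp hp0 hpz
    change (wordNorm S (g⁻¹⁻¹ * (z ^ j * p r)) : ℝ) ≤ D at hd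
    rw [inv_inv] at hd
    exact ⟨j, r, hr, (hB _).2 (by exact_mod_cast hd.trans (Nat.le_ceil D))⟩
  calc _ ≤ ((B.card * (k + 1) : ℕ) : ℝ) := by exact_mod_cast hcount
    _ ≤ 2 * (B.card + 1) * k := by
        have : (1 : ℝ) ≤ k := by exact_mod_cast hk
        push_cast
        nlinarith

/-- Linear bound on the number of cosets `g⟨z⟩` with `gzg⁻¹ ∈ U(x⁻¹,x,R)`: in a
δ-hyperbolic group, if the bi-infinite paths through the powers of elements of
`U(x⁻¹,x,R)` are (c₀,c₁)-quasi-geodesics (constants depending only on x, R, δ), then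
for all large `L` there is `C` such that for every `k` and every `z ∈ U(x⁻¹,x,R)`
with `|z| = k`, the set `C_k(z;x,L,R)` has at most `C·k` elements. -/
theorem conjugacy_coset_count {Γ : Type*} [Group Γ]
    (S : Set Γ) (hSfin : S.Finite) (hSsym : ∀ s ∈ S, s⁻¹ ∈ S)
    (hSgen : Subgroup.closure S = ⊤)
    (δ : ℝ) (hδ : 0 ≤ δ)
    (hhyp : ∀ x y z w : Γ, min (gpW S w x z) (gpW S w z y) - δ ≤ gpW S w x y)
    (x : Γ) (hx : ∀ n : ℤ, n ≠ 0 → x ^ n ≠ 1) (R : ℝ) (hR : 0 ≤ R)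
    (c₀ c₁ : ℝ) (hc₀ : 0 < c₀) (hc₁ : 0 ≤ c₁)
    (hqg : ∀ z ∈ Uset S x R, ∃ γ : ℤ → Γ, γ 0 = 1 ∧
      (∀ n : ℤ, γ (n * (wordNorm S z : ℤ)) = z ^ n) ∧
      ∀ i j : ℤ, c₀⁻¹ * |(i : ℝ) - (j : ℝ)| - c₁ ≤ wordDist S (γ i) (γ j) ∧
        wordDist S (γ i) (γ j) ≤ c₀ * |(i : ℝ) - (j : ℝ)| + c₁) :
    ∀ L : ℝ, 0 < L → ∃ C : ℝ, 0 < C ∧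
      ∀ (k : ℕ) (z : Γ), 0 < k → z ∈ Uset S x R → wordNorm S z = k →
        Set.ncard {q : Γ ⧸ Subgroup.zpowers z | ∃ g : Γ,
            (QuotientGroup.mk g : Γ ⧸ Subgroup.zpowers z) = q ∧
            g * z * g⁻¹ ∈ Uset S x R ∧ |(wordNorm S z : ℝ) - (k : ℝ)| ≤ L} ≤
          C * k :=
  conjugacy_coset_count_general S hSfin hSsym hSgen δ hδ hhyp x R c₀ c₁ hc₀ hc₁ hqg
end
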